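/- arXiv:0902.3784 — 10 statements merged into one kernel-verified Lean document; each statement's English description precedes it below -/
import Mathlib

section
/- Let μ > 1, 0 < α < 1 and c > 0 be real numbers, and let r : ℕ → ℝ be nonnegative with r(0) = 0 and r(n)·n^μ·α^n → c as n → ∞. Then ρ := ∑_{n≥1} r(n)·α^n converges; set τ := ρ/(1−α) and assume τ < 1 (note τ > 0 since c > 0). For n, j ∈ ℕ let δ(n,j) be the coefficient of z^n in R(z)^j·(1−z)^{−(j+1)}, where R(z) = ∑_n r(n)z^n ∈ ℝ[[z]], and let δ(n) := ∑_{j≥0} δ(n,j) (a finite sum, since δ(n,j) = 0 for j > n). Then for every integer i ≥ 1, lim_{n→∞} δ(n,i)/δ(n) = ((1−τ)²/τ)·i·τ^i. -/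
/-!
Multiplying by `α ^ n` turns `δ n j` into the `n`-th coefficient of `H ^ j * G`, where
`G = ∑ αⁿ zⁿ` is exponentially small and `H(z) = R(αz) / (1 - αz)` has nonnegative coefficients
with sum `τ < 1` and a polynomial tail `hₙ ~ c' n^(-μ)`. For such subexponential sequences the tail
of a Cauchy product comes from one large factor: `n^μ (a * b)ₙ → A M + B L` when `n^μ aₙ → L`,
`n^μ bₙ → M` and `A`, `B` are the sums. Hence `n^μ αⁿ δ(n, j) → j τ^(j-1) K`. Since `τ < 1`,
these weighted coefficients are bounded by a summable sequence in `j`, uniformly in `n`, so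
dominated convergence gives `n^μ αⁿ δ(n) → K / (1 - τ)²`, and the ratio tends to
`(1 - τ)² j τ^(j-1)`.
-/

namespace LimitLaw

open Filter Topology Finset PowerSeries

noncomputable section

def cauchyProduct (a b : ℕ → ℝ) (n : ℕ) : ℝ := ∑ p ∈ antidiagonal n, a p.1 * b p.2

section CauchyProduct

variable {a b h g : ℕ → ℝ}

lemma cauchyProduct_zero : cauchyProduct a b 0 = a 0 * b 0 := by
  simp [cauchyProduct]

lemma cauchyProduct_nonneg (ha : ∀ n, 0 ≤ a n) (hb : ∀ n, 0 ≤ b n) (n : ℕ) :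
    0 ≤ cauchyProduct a b n :=
  sum_nonneg fun _ _ => mul_nonneg (ha _) (hb _)

lemma mk_cauchyProduct : mk (cauchyProduct a b) = mk a * mk b := by
  ext n
  simp [cauchyProduct, coeff_mul]

lemma hasSum_cauchyProduct {A B : ℝ} (ha : HasSum a A) (hb : HasSum b B) :
    HasSum (cauchyProduct a b) (A * B) := by
  have hna : Summable (‖a ·‖) := summable_abs_iff.2 ha.summable
  have hnb : Summable (‖b ·‖) := summable_abs_iff.2 hb.summable
  rw [← ha.tsum_eq, ← hb.tsum_eq, tsum_mul_tsum_eq_tsum_sum_antidiagonal_of_summable_norm hna hnb]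
  exact (summable_norm_sum_mul_antidiagonal_of_summable_norm hna hnb).of_norm.hasSum

lemma iterate_cauchyProduct_nonneg (h0 : ∀ n, 0 ≤ h n) (g0 : ∀ n, 0 ≤ g n) (j n : ℕ) :
    0 ≤ (cauchyProduct h)^[j] g n := by
  induction j generalizing n with
  | zero => exact g0 n
  | succ j ih =>
    rw [Function.iterate_succ_apply']
    exact cauchyProduct_nonneg h0 ih n

lemma hasSum_iterate_cauchyProduct {τ S : ℝ} (hh : HasSum h τ) (hg : HasSum g S) (j : ℕ) :
    HasSum ((cauchyProduct h)^[j] g) (τ ^ j * S) := by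
  induction j with
  | zero => simpa using hg
  | succ j ih =>
    rw [Function.iterate_succ_apply', pow_succ', mul_assoc]
    exact hasSum_cauchyProduct hh ih

lemma iterate_cauchyProduct_eq_zero (hh0 : h 0 = 0) {j n : ℕ} (hnj : n < j) :
    (cauchyProduct h)^[j] g n = 0 := by
  induction j generalizing n with
  | zero => omega
  | succ j ih =>
    rw [Function.iterate_succ_apply']
    refine sum_eq_zero fun p hp => ?_
    rw [HasAntidiagonal.mem_antidiagonal] at hp
    rcases Nat.eq_zero_or_pos p.1 with hp1 | hp1
    · rw [hp1, hh0, zero_mul]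
    · rw [ih (by omega), mul_zero]

lemma mk_iterate_cauchyProduct (j : ℕ) :
    mk ((cauchyProduct h)^[j] g) = mk h ^ j * mk g := by
  induction j with
  | zero => simp
  | succ j ih => rw [Function.iterate_succ_apply', mk_cauchyProduct, ih]; ring

end CauchyProduct

def weight (μ : ℝ) (n : ℕ) : ℝ := ((n : ℝ) + 1) ^ μ

section Weight

variable {μ : ℝ}

lemma weight_pos (μ : ℝ) (n : ℕ) : 0 < weight μ n := by
  unfold weight
  positivity

lemma weight_le_rpow_mul_weight (hμ : 0 ≤ μ) {t : ℝ} (ht : 0 ≤ t) {m n : ℕ}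
    (h : (n : ℝ) + 1 ≤ t * ((m : ℝ) + 1)) : weight μ n ≤ t ^ μ * weight μ m := by
  rw [weight, weight, ← Real.mul_rpow ht (by positivity)]
  exact Real.rpow_le_rpow (by positivity) h hμ

lemma tendsto_add_rpow_div_add_rpow (μ x y : ℝ) :
    Tendsto (fun n : ℕ => ((n : ℝ) + x) ^ μ / ((n : ℝ) + y) ^ μ) atTop (𝓝 1) := by
  have hlim : Tendsto (fun n : ℕ => ((n : ℝ) + x) / ((n : ℝ) + y)) atTop (𝓝 1) := by
    simpa [add_comm] using tendsto_add_mul_div_add_mul_atTop_nhds x y 1 one_ne_zero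
  have hpos : ∀ᶠ n : ℕ in atTop, 0 ≤ (n : ℝ) + x ∧ 0 ≤ (n : ℝ) + y := by
    filter_upwards [eventually_ge_atTop ⌈|x| + |y|⌉₊] with n hn
    have := (Nat.ceil_le.1 hn)
    constructor <;> linarith [neg_abs_le x, neg_abs_le y, abs_nonneg x, abs_nonneg y]
  have hrpow : Tendsto (fun n : ℕ => (((n : ℝ) + x) / ((n : ℝ) + y)) ^ μ) atTop (𝓝 1) := by
    simpa using hlim.rpow_const (p := μ) (Or.inl one_ne_zero)
  refine hrpow.congr' ?_
  filter_upwards [hpos] with n ⟨hx, hy⟩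
  exact Real.div_rpow hx hy μ

lemma tendsto_weight_add_div_weight (μ : ℝ) (k : ℕ) :
    Tendsto (fun n => weight μ (n + k) / weight μ n) atTop (𝓝 1) := by
  simpa [weight, add_assoc] using tendsto_add_rpow_div_add_rpow μ (k + 1) 1

lemma tendsto_weight_mul_of_tendsto_rpow_mul {b : ℕ → ℝ} {B : ℝ}
    (h : Tendsto (fun n : ℕ => (n : ℝ) ^ μ * b n) atTop (𝓝 B)) :
    Tendsto (fun n => weight μ n * b n) atTop (𝓝 B) := by
  have hlim := (tendsto_add_rpow_div_add_rpow μ 1 0).mul h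
  rw [one_mul] at hlim
  refine hlim.congr' ?_
  filter_upwards [eventually_ge_atTop 1] with n hn
  have : (n : ℝ) ^ μ ≠ 0 := (Real.rpow_pos_of_pos (by exact_mod_cast hn) μ).ne'
  rw [add_zero, weight]
  field_simp

lemma tendsto_weight_mul_geometric (μ : ℝ) {α : ℝ} (hα0 : 0 < α) (hα1 : α < 1) :
    Tendsto (fun n => weight μ n * α ^ n) atTop (𝓝 0) := by
  have hb : 0 < -Real.log α := neg_pos.2 (Real.log_neg hα0 hα1)
  have := ((tendsto_rpow_mul_exp_neg_mul_atTop_nhds_zero μ _ hb).comp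
    (tendsto_atTop_add_const_right _ 1 tendsto_natCast_atTop_atTop)).div_const α
  simp only [Function.comp_def, zero_div] at this
  refine this.congr fun n => ?_
  rw [neg_neg, mul_comm, Real.exp_mul, Real.exp_log hα0, weight, Real.rpow_add_one hα0.ne',
    ← Real.rpow_natCast]
  field_simp

lemma summable_of_weight_mul_le (hμ : 1 < μ) {b : ℕ → ℝ} {C : ℝ} (hb0 : ∀ n, 0 ≤ b n)
    (hC : ∀ n, weight μ n * b n ≤ C) : Summable b := by
  have hs : Summable fun n : ℕ => C * (weight μ n)⁻¹ := by
    refine Summable.mul_left C ?_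
    simpa [weight] using (summable_nat_add_iff 1).2 (Real.summable_nat_rpow_inv.2 hμ)
  refine hs.of_nonneg_of_le hb0 fun n => ?_
  rw [← div_eq_mul_inv, le_div_iff₀ (weight_pos μ n), mul_comm]
  exact hC n

end Weight

section Convolution

variable {μ : ℝ} {a b : ℕ → ℝ}

lemma tendsto_weight_mul_tsum_lowerHalf (hμ : 0 ≤ μ) (s : ℕ) (ha0 : ∀ n, 0 ≤ a n)
    (hb0 : ∀ n, 0 ≤ b n) {A B : ℝ} (ha : HasSum a A)
    (hB : Tendsto (fun n => weight μ n * b n) atTop (𝓝 B)) :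
    Tendsto (fun n => ∑' k, if 2 * k + s ≤ n then weight μ n * (a k * b (n - k)) else 0)
      atTop (𝓝 (A * B)) := by
  obtain ⟨N, hN⟩ := hB.bddAbove_range
  rw [← ha.tsum_eq, ← tsum_mul_right]
  refine tendsto_tsum_of_dominated_convergence (bound := fun k => 2 ^ μ * N * a k)
    (ha.summable.mul_left _) (fun k => ?_) (Eventually.of_forall fun n k => ?_)
  · rw [← tendsto_add_atTop_iff_nat k]
    have hlim := ((tendsto_weight_add_div_weight μ k).mul hB).const_mul (a k)
    rw [one_mul] at hlim
    refine hlim.congr' ?_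
    filter_upwards [eventually_ge_atTop (k + s)] with m hm
    have := (weight_pos μ m).ne'
    rw [if_pos (by omega), Nat.add_sub_cancel]
    field_simp
  · split_ifs with hk
    · have hW : weight μ n ≤ 2 ^ μ * weight μ (n - k) :=
        weight_le_rpow_mul_weight hμ zero_le_two (by norm_cast; omega)
      have hab : 0 ≤ a k * b (n - k) := mul_nonneg (ha0 k) (hb0 _)
      rw [Real.norm_of_nonneg (mul_nonneg (weight_pos μ n).le hab)]
      calc weight μ n * (a k * b (n - k))
          ≤ 2 ^ μ * weight μ (n - k) * (a k * b (n - k)) :=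
            mul_le_mul_of_nonneg_right hW hab
        _ = 2 ^ μ * a k * (weight μ (n - k) * b (n - k)) := by ring
        _ ≤ 2 ^ μ * a k * N := mul_le_mul_of_nonneg_left (hN ⟨n - k, rfl⟩)
          (mul_nonneg (by positivity) (ha0 k))
        _ = 2 ^ μ * N * a k := by ring
    · rw [norm_zero]
      have := ha0 k
      have : 0 ≤ N := (mul_nonneg (weight_pos μ 0).le (hb0 0)).trans (hN ⟨0, rfl⟩)
      positivity

lemma sum_antidiagonal_eq_tsum_add_tsum (F : ℕ → ℕ → ℝ) (n : ℕ) :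
    ∑ p ∈ antidiagonal n, F p.1 p.2 =
      (∑' k, if 2 * k + 0 ≤ n then F k (n - k) else 0) +
        ∑' k, if 2 * k + 1 ≤ n then F (n - k) k else 0 := by
  have hsplit : ∀ p ∈ antidiagonal n, F p.1 p.2 =
      (if 2 * p.1 + 0 ≤ n then F p.1 p.2 else 0) + if 2 * p.2 + 1 ≤ n then F p.1 p.2 else 0 := by
    intro p hp
    rw [HasAntidiagonal.mem_antidiagonal] at hp
    split_ifs <;> first | omega | simp
  rw [sum_congr rfl hsplit, sum_add_distrib, ← Nat.sum_antidiagonal_swap (n := n)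
    (f := fun p => if 2 * p.2 + 1 ≤ n then F p.1 p.2 else 0)]
  simp only [Prod.fst_swap, Prod.snd_swap]
  rw [Nat.sum_antidiagonal_eq_sum_range_succ (fun i j => if 2 * i + 0 ≤ n then F i j else 0),
    Nat.sum_antidiagonal_eq_sum_range_succ (fun i j => if 2 * i + 1 ≤ n then F j i else 0)]
  congr 1 <;> refine (tsum_eq_sum fun k hk => ?_).symm <;> rw [mem_range] at hk <;>
    rw [if_neg (by omega)]

lemma tendsto_weight_mul_cauchyProduct (hμ : 0 ≤ μ) (ha0 : ∀ n, 0 ≤ a n) (hb0 : ∀ n, 0 ≤ b n)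
    {A B L M : ℝ} (ha : HasSum a A) (hb : HasSum b B)
    (hL : Tendsto (fun n => weight μ n * a n) atTop (𝓝 L))
    (hM : Tendsto (fun n => weight μ n * b n) atTop (𝓝 M)) :
    Tendsto (fun n => weight μ n * cauchyProduct a b n) atTop (𝓝 (A * M + B * L)) := by
  refine ((tendsto_weight_mul_tsum_lowerHalf hμ 0 ha0 hb0 ha hM).add
    (tendsto_weight_mul_tsum_lowerHalf hμ 1 hb0 ha0 hb hL)).congr fun n => ?_
  rw [cauchyProduct, mul_sum,
    sum_antidiagonal_eq_tsum_add_tsum (fun i j => weight μ n * (a i * b j))]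
  simp only [mul_comm (b _) (a _)]

section Bound

variable (hμ : 0 ≤ μ) {ε : ℝ} (hε0 : 0 < ε) (hε1 : ε < 1) (ha0 : ∀ n, 0 ≤ a n)
  (hb0 : ∀ n, 0 ≤ b n) {Na Nb : ℝ} (hNa : ∀ n, weight μ n * a n ≤ Na)
  (hNb : ∀ n, weight μ n * b n ≤ Nb)
include hμ hε0 hε1 ha0 hb0 hNa hNb

lemma weight_add_mul_mul_le (k m : ℕ) :
    weight μ (k + m) * (a k * b m) ≤ (1 - ε)⁻¹ ^ μ * (Nb * a k) + ε⁻¹ ^ μ * (Na * b m) := by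
  have hNa0 : 0 ≤ Na := (mul_nonneg (weight_pos μ 0).le (ha0 0)).trans (hNa 0)
  have hNb0 : 0 ≤ Nb := (mul_nonneg (weight_pos μ 0).le (hb0 0)).trans (hNb 0)
  have hab : 0 ≤ a k * b m := mul_nonneg (ha0 k) (hb0 m)
  have hsum : ((k + m : ℕ) : ℝ) + 1 + 1 = ((k : ℝ) + 1) + ((m : ℝ) + 1) := by push_cast; ring
  -- `(k + 1) + (m + 1) > k + m + 1`, so either `m + 1 ≥ (1 - ε) (k + m + 1)`
  -- or `k + 1 > ε (k + m + 1)`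
  by_cases hcase : (1 - ε) * (((k + m : ℕ) : ℝ) + 1) ≤ (m : ℝ) + 1
  · have hW : weight μ (k + m) ≤ (1 - ε)⁻¹ ^ μ * weight μ m :=
      weight_le_rpow_mul_weight hμ (inv_nonneg.2 (by linarith)) (by
        rw [inv_mul_eq_div, le_div_iff₀ (by linarith)]; linarith)
    calc weight μ (k + m) * (a k * b m)
        ≤ (1 - ε)⁻¹ ^ μ * weight μ m * (a k * b m) := mul_le_mul_of_nonneg_right hW hab
      _ = (1 - ε)⁻¹ ^ μ * a k * (weight μ m * b m) := by ring
      _ ≤ (1 - ε)⁻¹ ^ μ * a k * Nb := mul_le_mul_of_nonneg_left (hNb m) (by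
          have := ha0 k; have : 0 ≤ 1 - ε := by linarith
          positivity)
      _ ≤ _ := by
        have := hb0 m
        nlinarith [show 0 ≤ ε⁻¹ ^ μ * (Na * b m) by positivity]
  · have hW : weight μ (k + m) ≤ ε⁻¹ ^ μ * weight μ k :=
      weight_le_rpow_mul_weight hμ (inv_nonneg.2 hε0.le) (by
        rw [inv_mul_eq_div, le_div_iff₀ hε0]; linarith)
    calc weight μ (k + m) * (a k * b m)
        ≤ ε⁻¹ ^ μ * weight μ k * (a k * b m) := mul_le_mul_of_nonneg_right hW hab
      _ = ε⁻¹ ^ μ * b m * (weight μ k * a k) := by ring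
      _ ≤ ε⁻¹ ^ μ * b m * Na := mul_le_mul_of_nonneg_left (hNa k) (by
          have := hb0 m
          positivity)
      _ ≤ _ := by
        have := ha0 k; have : 0 ≤ 1 - ε := by linarith
        nlinarith [show 0 ≤ (1 - ε)⁻¹ ^ μ * (Nb * a k) by positivity]

lemma weight_mul_cauchyProduct_le {A B : ℝ} (ha : HasSum a A) (hb : HasSum b B) (n : ℕ) :
    weight μ n * cauchyProduct a b n ≤ (1 - ε)⁻¹ ^ μ * (Nb * A) + ε⁻¹ ^ μ * (Na * B) := by
  have hNa0 : 0 ≤ Na := (mul_nonneg (weight_pos μ 0).le (ha0 0)).trans (hNa 0)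
  have hNb0 : 0 ≤ Nb := (mul_nonneg (weight_pos μ 0).le (hb0 0)).trans (hNb 0)
  have hsa : ∑ p ∈ antidiagonal n, a p.1 ≤ A := by
    rw [Nat.sum_antidiagonal_eq_sum_range_succ (fun i _ => a i)]
    exact sum_le_hasSum _ (fun i _ => ha0 i) ha
  have hsb : ∑ p ∈ antidiagonal n, b p.2 ≤ B := by
    rw [← Nat.sum_antidiagonal_swap]
    simp only [Prod.snd_swap]
    rw [Nat.sum_antidiagonal_eq_sum_range_succ (fun i _ => b i)]
    exact sum_le_hasSum _ (fun i _ => hb0 i) hb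
  calc weight μ n * cauchyProduct a b n
      = ∑ p ∈ antidiagonal n, weight μ (p.1 + p.2) * (a p.1 * b p.2) := by
        rw [cauchyProduct, mul_sum]
        refine sum_congr rfl fun p hp => ?_
        rw [HasAntidiagonal.mem_antidiagonal.1 hp]
    _ ≤ ∑ p ∈ antidiagonal n, ((1 - ε)⁻¹ ^ μ * (Nb * a p.1) + ε⁻¹ ^ μ * (Na * b p.2)) :=
        sum_le_sum fun p _ => weight_add_mul_mul_le hμ hε0 hε1 ha0 hb0 hNa hNb p.1 p.2
    _ = (1 - ε)⁻¹ ^ μ * (Nb * ∑ p ∈ antidiagonal n, a p.1)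
          + ε⁻¹ ^ μ * (Na * ∑ p ∈ antidiagonal n, b p.2) := by
        rw [sum_add_distrib, mul_sum, mul_sum, mul_sum, mul_sum]
    _ ≤ _ := by gcongr

end Bound

end Convolution

/-- The weighted tail of `h^{*j} * g` sits either in `g` or in one of the `j` factors `h`. -/
def iterLimit (τ G K : ℝ) (j : ℕ) : ℝ := τ ^ j * G + j * τ ^ (j - 1) * K

lemma iterLimit_succ (τ G K : ℝ) (j : ℕ) :
    iterLimit τ G K (j + 1) = τ * iterLimit τ G K j + τ ^ j * K := by
  cases j with
  | zero => simp [iterLimit]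
  | succ j => simp only [iterLimit, Nat.add_sub_cancel]; push_cast; ring

lemma hasSum_iterLimit {τ : ℝ} (hτ0 : 0 ≤ τ) (hτ1 : τ < 1) (G K : ℝ) :
    HasSum (iterLimit τ G K) (G / (1 - τ) + K / (1 - τ) ^ 2) := by
  have hnorm : ‖τ‖ < 1 := by rwa [Real.norm_of_nonneg hτ0]
  have hgeom := hasSum_geometric_of_lt_one hτ0 hτ1
  have hderiv : HasSum (fun j : ℕ => (j : ℝ) * τ ^ (j - 1)) ((1 - τ) ^ 2)⁻¹ := by
    have hshift := (hasSum_coe_mul_geometric_of_norm_lt_one hnorm).add hgeom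
    rw [show τ / (1 - τ) ^ 2 + (1 - τ)⁻¹ = ((1 - τ) ^ 2)⁻¹ by field_simp; ring] at hshift
    rw [← hasSum_nat_add_iff' 1]
    simpa [add_mul] using hshift
  have hsum := (hgeom.mul_right G).add (hderiv.mul_right K)
  rw [show (1 - τ)⁻¹ * G + ((1 - τ) ^ 2)⁻¹ * K = G / (1 - τ) + K / (1 - τ) ^ 2 by ring] at hsum
  exact hsum

section Iterate

variable {μ τ S H G : ℝ} {h g : ℕ → ℝ} (hμ : 0 ≤ μ) (h0 : ∀ n, 0 ≤ h n) (g0 : ∀ n, 0 ≤ g n)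
  (hh : HasSum h τ) (hg : HasSum g S)
  (hH : Tendsto (fun n => weight μ n * h n) atTop (𝓝 H))
  (hG : Tendsto (fun n => weight μ n * g n) atTop (𝓝 G))
include hμ h0 g0 hh hg hH hG

lemma tendsto_weight_mul_iterate_cauchyProduct (j : ℕ) :
    Tendsto (fun n => weight μ n * (cauchyProduct h)^[j] g n) atTop
      (𝓝 (iterLimit τ G (S * H) j)) := by
  induction j with
  | zero => simpa [iterLimit] using hG
  | succ j ih =>
    simp only [Function.iterate_succ_apply']
    convert tendsto_weight_mul_cauchyProduct hμ h0 (iterate_cauchyProduct_nonneg h0 g0 j) hh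
      (hasSum_iterate_cauchyProduct hh hg j) hH ih using 2
    rw [iterLimit_succ]
    ring

/-- Each convolution with `h` multiplies the bound by `(1 - ε)⁻¹ ^ μ * τ`, which is `< 1` for
small `ε`, up to an error term of order `τ ^ j`; hence the bound `(N + j K) τ' ^ j`. -/
lemma exists_summable_bound_weight_mul_iterate (hτ1 : τ < 1) :
    ∃ β : ℕ → ℝ, Summable β ∧ ∀ j n, weight μ n * (cauchyProduct h)^[j] g n ≤ β j := by
  have hτ0 : 0 ≤ τ := hh.nonneg h0
  set τ' := (1 + τ) / 2 with hτ'
  have hτ'0 : 0 < τ' := by positivity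
  have hτ'1 : τ' < 1 := by linarith
  obtain ⟨ε, ⟨hε0, hε1⟩, hετ⟩ : ∃ ε ∈ Set.Ioo (0 : ℝ) 1, (1 - ε)⁻¹ ^ μ * τ < τ' := by
    have hcont : Tendsto (fun ε : ℝ => (1 - ε)⁻¹ ^ μ * τ) (𝓝 0) (𝓝 τ) := by
      have h1 : Tendsto (fun ε : ℝ => (1 - ε)⁻¹) (𝓝 0) (𝓝 1) := by
        simpa using (tendsto_const_nhds.sub tendsto_id).inv₀ (by norm_num : (1 : ℝ) - 0 ≠ 0)
      simpa using (h1.rpow_const (p := μ) (Or.inl one_ne_zero)).mul_const τ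
    exact (Eventually.and (Ioo_mem_nhdsGT one_pos)
      ((hcont.mono_left nhdsWithin_le_nhds).eventually (gt_mem_nhds (by linarith)))).exists
  obtain ⟨Q, hQ⟩ := hH.bddAbove_range
  obtain ⟨N, hN⟩ := hG.bddAbove_range
  have hQ0 : 0 ≤ Q := (mul_nonneg (weight_pos μ 0).le (h0 0)).trans (hQ ⟨0, rfl⟩)
  have hN0 : 0 ≤ N := (mul_nonneg (weight_pos μ 0).le (g0 0)).trans (hN ⟨0, rfl⟩)
  have hS0 : 0 ≤ S := hg.nonneg g0
  set K := ε⁻¹ ^ μ * (Q * S) / τ'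
  refine ⟨fun j => (N + j * K) * τ' ^ j, ?_, fun j => ?_⟩
  · have hnorm : ‖τ'‖ < 1 := by rwa [Real.norm_of_nonneg hτ'0.le]
    refine (((summable_geometric_of_lt_one hτ'0.le hτ'1).mul_left N).add
      ((summable_pow_mul_geometric_of_norm_lt_one 1 hnorm).mul_left K)).congr fun j => ?_
    simp only [pow_one]
    ring
  induction j with
  | zero => simpa using fun n => hN ⟨n, rfl⟩
  | succ j ih =>
    intro n
    rw [Function.iterate_succ_apply']
    have hβ0 : 0 ≤ (N + j * K) * τ' ^ j := by positivity
    calc weight μ n * cauchyProduct h ((cauchyProduct h)^[j] g) n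
        ≤ (1 - ε)⁻¹ ^ μ * ((N + j * K) * τ' ^ j * τ) + ε⁻¹ ^ μ * (Q * (τ ^ j * S)) :=
          weight_mul_cauchyProduct_le hμ hε0 hε1 h0 (iterate_cauchyProduct_nonneg h0 g0 j)
            (fun n => hQ ⟨n, rfl⟩) ih hh (hasSum_iterate_cauchyProduct hh hg j) n
      _ ≤ τ' * ((N + j * K) * τ' ^ j) + K * τ' * τ' ^ j := by
          gcongr ?_ + ?_
          · nlinarith
          · have : τ ^ j ≤ τ' ^ j := pow_le_pow_left₀ hτ0 (by linarith) j
            have : K * τ' = ε⁻¹ ^ μ * (Q * S) := div_mul_cancel₀ _ hτ'0.ne'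
            rw [this]
            have : 0 ≤ ε⁻¹ ^ μ * (Q * S) := by positivity
            nlinarith
      _ = (N + ↑(j + 1) * K) * τ' ^ (j + 1) := by push_cast; ring

lemma tendsto_weight_mul_tsum_iterate_cauchyProduct (hτ1 : τ < 1) :
    Tendsto (fun n => weight μ n * ∑' j, (cauchyProduct h)^[j] g n) atTop
      (𝓝 (G / (1 - τ) + S * H / (1 - τ) ^ 2)) := by
  obtain ⟨β, hβ, hle⟩ := exists_summable_bound_weight_mul_iterate hμ h0 g0 hh hg hH hG hτ1
  rw [← (hasSum_iterLimit (hh.nonneg h0) hτ1 G (S * H)).tsum_eq]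
  simp_rw [← tsum_mul_left]
  refine tendsto_tsum_of_dominated_convergence hβ
    (tendsto_weight_mul_iterate_cauchyProduct hμ h0 g0 hh hg hH hG)
    (Eventually.of_forall fun n j => ?_)
  have hnonneg := mul_nonneg (weight_pos μ n).le (iterate_cauchyProduct_nonneg h0 g0 j n)
  rw [Real.norm_of_nonneg hnonneg]
  exact hle j n

end Iterate

theorem tendsto_iterate_cauchyProduct_div_sum {μ τ S H : ℝ} {h g : ℕ → ℝ} (hμ : 0 ≤ μ)
    (h0 : ∀ n, 0 ≤ h n) (hh0 : h 0 = 0) (g0 : ∀ n, 0 ≤ g n) (hh : HasSum h τ) (hτ0 : 0 < τ)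
    (hτ1 : τ < 1) (hg : HasSum g S) (hSH : S * H ≠ 0)
    (hH : Tendsto (fun n => weight μ n * h n) atTop (𝓝 H))
    (hG : Tendsto (fun n => weight μ n * g n) atTop (𝓝 0)) {i : ℕ} (hi : 1 ≤ i) :
    Tendsto (fun n => (cauchyProduct h)^[i] g n / ∑ j ∈ range (n + 1), (cauchyProduct h)^[j] g n)
      atTop (𝓝 ((1 - τ) ^ 2 / τ * i * τ ^ i)) := by
  have hnum := tendsto_weight_mul_iterate_cauchyProduct hμ h0 g0 hh hg hH hG i
  have hden := tendsto_weight_mul_tsum_iterate_cauchyProduct hμ h0 g0 hh hg hH hG hτ1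
  have h1τ : 1 - τ ≠ 0 := by linarith
  have hlim : iterLimit τ 0 (S * H) i / (0 / (1 - τ) + S * H / (1 - τ) ^ 2) =
      (1 - τ) ^ 2 / τ * i * τ ^ i := by
    obtain ⟨k, rfl⟩ := Nat.exists_eq_add_of_le' hi
    have hS : S ≠ 0 := left_ne_zero_of_mul hSH
    have hH' : H ≠ 0 := right_ne_zero_of_mul hSH
    simp only [iterLimit, Nat.add_sub_cancel]
    field_simp
    ring
  rw [← hlim]
  refine (hnum.div hden (by simp [hSH, h1τ])).congr fun n => ?_
  rw [Pi.div_apply, tsum_eq_sum (s := range (n + 1))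
    fun j hj => iterate_cauchyProduct_eq_zero hh0 (by simpa using hj),
    mul_div_mul_left _ _ (weight_pos μ n).ne']

lemma inv_one_sub_X_eq_mk_one {k : Type*} [Field k] : ((1 - X : k⟦X⟧)⁻¹) = PowerSeries.mk 1 :=
  (inv_eq_iff_mul_eq_one (by simp)).2 (mk_one_mul_one_sub_eq_one k)

lemma pow_mul_coeff_eq_iterate_cauchyProduct (α : ℝ) (r : ℕ → ℝ) (j n : ℕ) :
    α ^ n * coeff n (mk r ^ j * ((1 - X)⁻¹) ^ (j + 1)) =
      (cauchyProduct (cauchyProduct (fun n => r n * α ^ n) (α ^ ·)))^[j] (α ^ ·) n := by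
  have hmk : (PowerSeries.mk fun n => α ^ n * r n) = PowerSeries.mk fun n => r n * α ^ n := by
    simp only [mul_comm]
  rw [← coeff_rescale, map_mul, map_pow, map_pow, inv_one_sub_X_eq_mk_one, rescale_mk,
    rescale_mk, ← coeff_mk n ((cauchyProduct _)^[j] _), mk_iterate_cauchyProduct,
    mk_cauchyProduct]
  simp only [Pi.one_apply, mul_one, hmk]
  congr 1
  ring

end

end LimitLaw

open Filter LimitLaw

theorem stmt_1 (μ α c : ℝ) (hμ : 1 < μ) (hα0 : 0 < α) (hα1 : α < 1) (hc : 0 < c)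
    (r : ℕ → ℝ) (hr0 : r 0 = 0) (hrpos : ∀ n, 0 ≤ r n)
    (hasym : Tendsto (fun n : ℕ => r n * (n : ℝ) ^ μ * α ^ n) atTop (nhds c))
    (ρ τ : ℝ) (hρ : ρ = ∑' n : ℕ, r n * α ^ n) (hτ : τ = ρ / (1 - α)) (hτ1 : τ < 1)
    (δ : ℕ → ℕ → ℝ)
    (hδ : ∀ n j, δ n j = PowerSeries.coeff (R := ℝ) n
      ((PowerSeries.mk r) ^ j * ((1 - PowerSeries.X)⁻¹) ^ (j + 1)))
    (δtot : ℕ → ℝ) (hδtot : ∀ n, δtot n = ∑ j ∈ Finset.range (n + 1), δ n j) :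
    Summable (fun n : ℕ => r n * α ^ n) ∧
      ∀ i : ℕ, 1 ≤ i →
        Tendsto (fun n => δ n i / δtot n) atTop
          (nhds ((1 - τ) ^ 2 / τ * i * τ ^ i)) := by
  set a : ℕ → ℝ := fun n => r n * α ^ n
  have ha0 : ∀ n, 0 ≤ a n := fun n => mul_nonneg (hrpos n) (pow_nonneg hα0.le n)
  have hA : Tendsto (fun n => weight μ n * a n) atTop (nhds c) :=
    tendsto_weight_mul_of_tendsto_rpow_mul (hasym.congr fun n => by ring)
  obtain ⟨C, hC⟩ := hA.bddAbove_range
  have hsa : Summable a := summable_of_weight_mul_le hμ ha0 fun n => hC ⟨n, rfl⟩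
  refine ⟨hsa, fun i hi => ?_⟩
  have hg := hasSum_geometric_of_lt_one hα0.le hα1
  have hh : HasSum (cauchyProduct a (α ^ ·)) τ := by
    rw [hτ, hρ, div_eq_mul_inv]
    exact hasSum_cauchyProduct hsa.hasSum hg
  have hτ0 : 0 < τ := by
    obtain ⟨n, hn⟩ := (hA.eventually (lt_mem_nhds hc)).exists
    have han : 0 < a n := pos_of_mul_pos_right hn (weight_pos μ n).le
    exact hτ ▸ div_pos (hρ ▸ hsa.tsum_pos ha0 n han) (sub_pos.2 hα1)
  have hH := tendsto_weight_mul_cauchyProduct (by linarith) ha0 (fun n => pow_nonneg hα0.le n)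
    hsa.hasSum hg hA (tendsto_weight_mul_geometric μ hα0 hα1)
  have key := tendsto_iterate_cauchyProduct_div_sum (by linarith) (cauchyProduct_nonneg ha0
    fun n => pow_nonneg hα0.le n) (by simp [cauchyProduct_zero, a, hr0])
    (fun n => pow_nonneg hα0.le n) hh hτ0 hτ1 hg (by simp [(sub_pos.2 hα1).ne', hc.ne']) hH
    (tendsto_weight_mul_geometric μ hα0 hα1) hi
  refine key.congr fun n => ?_
  have hcount : ∀ j, (cauchyProduct (cauchyProduct a (α ^ ·)))^[j] (α ^ ·) n = α ^ n * δ n j :=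
    fun j => by rw [hδ]; exact (pow_mul_coeff_eq_iterate_cauchyProduct α r j n).symm
  simp only [hcount, ← Finset.mul_sum, ← hδtot]
  exact mul_div_mul_left _ _ (pow_ne_zero n hα0.ne')
end

section
/- Let μ > 1, let 0 < α₁ < α₂ < 1 and c₁, c₂ > 0 be real numbers, and let R₁, R₂ : ℕ → ℝ satisfy R_m(n)·n^μ·α_m^n → c_m as n → ∞ for m = 1, 2. Set λ := ln(α₁)/ln(α₂) (so λ > 1) and x_n := ⌊n·(λ − 1)⌋. Then (c₂/c₁)·λ^{−μ}·α₂ ≤ liminf_{n→∞} R₂(n + x_n)/R₁(n) and limsup_{n→∞} R₂(n + x_n)/R₁(n) ≤ (c₂/c₁)·λ^{−μ}. In particular, for all sufficiently large n the two sequences R₁(n) and R₂(n + x_n) agree up to positive bounded multiplicative factors. -/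
/-!
Put `g_m(n) = R_m(n) n^μ α_m^n` and `N = n + x_n`. Then
`R₂(N) / R₁(n) = (g₂(N) / g₁(n)) · (n / N)^μ · (α₁^n / α₂^N)`.
The first two factors converge to `c₂/c₁` and `λ^{-μ}`, because `N / n → λ`. Since `α₁ = α₂^λ`,
the last factor is `α₂^θ` with `θ = n(λ - 1) - ⌊n(λ - 1)⌋ ∈ [0, 1)`, so it oscillates in `[α₂, 1]`;
this is the source of the gap between the liminf and limsup bounds.
-/

open Filter Real Set Topology

lemma tendsto_add_nat_floor_mul_div_atTop {a : ℝ} (ha : 0 ≤ a) :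
    Tendsto (fun n : ℕ => ((n + ⌊(n : ℝ) * a⌋₊ : ℕ) : ℝ) / n) atTop (𝓝 (1 + a)) := by
  refine (((tendsto_nat_floor_mul_div_atTop ha).comp
    tendsto_natCast_atTop_atTop).const_add 1).congr' ?_
  filter_upwards [eventually_ge_atTop 1] with n hn
  have hn0 : (n : ℝ) ≠ 0 := by positivity
  simp only [Function.comp_apply, Nat.cast_add, mul_comm a]
  field_simp

lemma tendsto_div_add_nat_floor_rpow_atTop {lam : ℝ} (hlam : 1 ≤ lam) (μ : ℝ) :
    Tendsto (fun n : ℕ => ((n : ℝ) / (n + ⌊(n : ℝ) * (lam - 1)⌋₊ : ℕ)) ^ μ) atTop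
      (𝓝 (lam ^ (-μ))) := by
  have hlam0 : 0 < lam := one_pos.trans_le hlam
  have := ((tendsto_add_nat_floor_mul_div_atTop (sub_nonneg.2 hlam)).inv₀
    (by linarith)).rpow_const (p := μ) (.inl (by positivity))
  simpa only [add_sub_cancel, inv_div, inv_rpow hlam0.le, ← rpow_neg hlam0.le] using this

lemma rpow_mul_log_div_log {a b : ℝ} (ha : 0 < a) (hb : 0 < b) (hb1 : b ≠ 1) (t : ℝ) :
    b ^ (t * (log a / log b)) = a ^ t := by
  have hlogb : log b ≠ 0 := log_ne_zero_of_pos_of_ne_one hb hb1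
  rw [rpow_def_of_pos hb, rpow_def_of_pos ha]
  field_simp

lemma pow_div_pow_add_nat_floor_eq_rpow {a b : ℝ} (ha : 0 < a) (hb : 0 < b) (hb1 : b ≠ 1)
    (n : ℕ) :
    a ^ n / b ^ (n + ⌊(n : ℝ) * (log a / log b - 1)⌋₊) =
      b ^ ((n : ℝ) * (log a / log b - 1) - ⌊(n : ℝ) * (log a / log b - 1)⌋₊) := by
  rw [← rpow_natCast a, ← rpow_mul_log_div_log ha hb hb1, ← rpow_natCast b, ← rpow_sub hb]
  push_cast
  ring_nf

lemma rpow_sub_nat_floor_mem_Icc {b y : ℝ} (hb0 : 0 < b) (hb1 : b ≤ 1) (hy : 0 ≤ y) :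
    b ^ (y - ⌊y⌋₊) ∈ Icc b 1 := by
  have hfrac0 : 0 ≤ y - ⌊y⌋₊ := sub_nonneg.2 (Nat.floor_le hy)
  have hfrac1 : y - ⌊y⌋₊ ≤ 1 := by linarith [Nat.lt_floor_add_one y]
  refine ⟨?_, rpow_le_one hb0.le hb1 hfrac0⟩
  calc b = b ^ (1 : ℝ) := (rpow_one b).symm
    _ ≤ b ^ (y - ⌊y⌋₊) := rpow_le_rpow_of_exponent_ge hb0 hb1 hfrac1

lemma le_liminf_and_limsup_le_of_eventuallyEq_mul {ι : Type*} {f : Filter ι} [NeBot f]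
    {u L D : ι → ℝ} {ℓ a : ℝ} (hL : Tendsto L f (𝓝 ℓ)) (hL0 : ∀ᶠ i in f, 0 ≤ L i)
    (hD : ∀ᶠ i in f, D i ∈ Icc a 1) (hu : ∀ᶠ i in f, u i = L i * D i) :
    ℓ * a ≤ liminf u f ∧ limsup u f ≤ ℓ := by
  have hLa : Tendsto (fun i => L i * a) f (𝓝 (ℓ * a)) := hL.mul_const a
  have hlower : ∀ᶠ i in f, L i * a ≤ u i := by
    filter_upwards [hL0, hD, hu] with i hLi hDi hui
    rw [hui]
    exact mul_le_mul_of_nonneg_left hDi.1 hLi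
  have hupper : ∀ᶠ i in f, u i ≤ L i := by
    filter_upwards [hL0, hD, hu] with i hLi hDi hui
    rw [hui]
    exact mul_le_of_le_one_right hLi hDi.2
  constructor
  · rw [← hLa.liminf_eq]
    exact liminf_le_liminf hlower hLa.isBoundedUnder_ge
      (hL.isBoundedUnder_le.mono_le hupper).isCoboundedUnder_ge
  · rw [← hL.limsup_eq]
    exact limsup_le_limsup hupper (hLa.isBoundedUnder_ge.mono_ge hlower).isCoboundedUnder_le
      hL.isBoundedUnder_le

theorem stmt_4_general (μ α₁ α₂ c₁ c₂ : ℝ)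
    (hα₁ : 0 < α₁) (hα : α₁ < α₂) (hα₂ : α₂ < 1) (hc₁ : 0 < c₁) (hc₂ : 0 < c₂)
    (R₁ R₂ : ℕ → ℝ)
    (h₁ : Tendsto (fun n : ℕ => R₁ n * (n : ℝ) ^ μ * α₁ ^ n) atTop (nhds c₁))
    (h₂ : Tendsto (fun n : ℕ => R₂ n * (n : ℝ) ^ μ * α₂ ^ n) atTop (nhds c₂))
    (lam : ℝ) (hlam : lam = Real.log α₁ / Real.log α₂)
    (x : ℕ → ℕ) (hx : ∀ n, x n = ⌊(n : ℝ) * (lam - 1)⌋₊) :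
    c₂ / c₁ * lam ^ (-μ) * α₂ ≤
        atTop.liminf (fun n : ℕ => R₂ (n + x n) / R₁ n) ∧
      atTop.limsup (fun n : ℕ => R₂ (n + x n) / R₁ n) ≤ c₂ / c₁ * lam ^ (-μ) := by
  have hα₂0 : 0 < α₂ := hα₁.trans hα
  have hlam1 : 1 ≤ lam := by
    rw [hlam, one_le_div_of_neg (log_neg hα₂0 hα₂)]
    exact (log_lt_log hα₁ hα).le
  obtain rfl : x = fun n : ℕ => ⌊(n : ℝ) * (lam - 1)⌋₊ := funext hx
  set N : ℕ → ℕ := fun n => n + ⌊(n : ℝ) * (lam - 1)⌋₊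
  set g₁ : ℕ → ℝ := fun n => R₁ n * (n : ℝ) ^ μ * α₁ ^ n
  set g₂ : ℕ → ℝ := fun n => R₂ n * (n : ℝ) ^ μ * α₂ ^ n
  have hg₂N : Tendsto (fun n => g₂ (N n)) atTop (𝓝 c₂) :=
    h₂.comp (tendsto_atTop_mono (fun n => Nat.le_add_right _ _) tendsto_id)
  have hD : ∀ n, α₁ ^ n / α₂ ^ N n ∈ Icc α₂ 1 := fun n => by
    simp only [N, hlam, pow_div_pow_add_nat_floor_eq_rpow hα₁ hα₂0 hα₂.ne]
    exact rpow_sub_nat_floor_mem_Icc hα₂0 hα₂.le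
      (mul_nonneg n.cast_nonneg (hlam ▸ sub_nonneg.2 hlam1))
  refine le_liminf_and_limsup_le_of_eventuallyEq_mul
    ((hg₂N.div h₁ hc₁.ne').mul (tendsto_div_add_nat_floor_rpow_atTop hlam1 μ)) ?_
    (Eventually.of_forall hD) ?_
  · filter_upwards [h₁.eventually (eventually_gt_nhds hc₁),
      hg₂N.eventually (eventually_gt_nhds hc₂)] with n hg₁n hg₂n
    exact mul_nonneg (div_pos hg₂n hg₁n).le (by positivity)
  · filter_upwards [eventually_ge_atTop 1] with n hn
    have hn0 : (0 : ℝ) < n := by exact_mod_cast hn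
    have hN0 : (0 : ℝ) < N n := by exact_mod_cast hn.trans (Nat.le_add_right _ _)
    show R₂ (N n) / R₁ n = g₂ (N n) / g₁ n * ((n : ℝ) / N n) ^ μ * (α₁ ^ n / α₂ ^ N n)
    rw [div_rpow hn0.le hN0.le]
    simp only [g₁, g₂]
    field_simp

theorem stmt_4 (μ α₁ α₂ c₁ c₂ : ℝ) (hμ : 1 < μ)
    (hα₁ : 0 < α₁) (hα : α₁ < α₂) (hα₂ : α₂ < 1) (hc₁ : 0 < c₁) (hc₂ : 0 < c₂)
    (R₁ R₂ : ℕ → ℝ)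
    (h₁ : Tendsto (fun n : ℕ => R₁ n * (n : ℝ) ^ μ * α₁ ^ n) atTop (nhds c₁))
    (h₂ : Tendsto (fun n : ℕ => R₂ n * (n : ℝ) ^ μ * α₂ ^ n) atTop (nhds c₂))
    (lam : ℝ) (hlam : lam = Real.log α₁ / Real.log α₂)
    (x : ℕ → ℕ) (hx : ∀ n, x n = ⌊(n : ℝ) * (lam - 1)⌋₊) :
    c₂ / c₁ * lam ^ (-μ) * α₂ ≤
        atTop.liminf (fun n : ℕ => R₂ (n + x n) / R₁ n) ∧
      atTop.limsup (fun n : ℕ => R₂ (n + x n) / R₁ n) ≤ c₂ / c₁ * lam ^ (-μ) :=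
  stmt_4_general μ α₁ α₂ c₁ c₂ hα₁ hα hα₂ hc₁ hc₂ R₁ R₂ h₁ h₂ lam hlam x hx
end

section
/- Let μ > 1, let 0 < α₁ < α₂ < 1 and c₁, c₂ > 0 be real numbers, and let R₁, R₂ : ℕ → ℝ satisfy R_m(n)·n^μ·α_m^n → c_m as n → ∞ for m = 1, 2. Suppose x : ℕ → ℕ is a sequence such that R₂(n + x_n)/R₁(n) converges to a positive real limit as n → ∞. Then x_n/n → ln(α₁)/ln(α₂) − 1 as n → ∞. -/
/-!
Taking logarithms, `R_m(n) ≈ c_m n^(-μ) α_m^(-n)` turns the convergence of `R₂(n + x_n)/R₁(n)`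
into `μ log m + m log α₂ - μ log n - n log α₁ = O(1)` for `m = n + x_n ≥ n`. After division
by `m` the logarithmic terms vanish, leaving `n/m → log α₂ / log α₁`.
-/

open Filter Topology Real

/-- The logarithm of `t ^ μ * α ^ t` when `a = log α`. -/
noncomputable def logGrowth (μ a t : ℝ) : ℝ := μ * log t + t * a

lemma tendsto_log_add_logGrowth {u : ℕ → ℝ} {μ α c : ℝ} (hα : α ≠ 0) (hc : c ≠ 0)
    (h : Tendsto (fun n : ℕ => u n * (n : ℝ) ^ μ * α ^ n) atTop (𝓝 c)) :
    Tendsto (fun n : ℕ => log (u n) + logGrowth μ (log α) n) atTop (𝓝 (log c)) := by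
  refine (h.log hc).congr' ?_
  filter_upwards [h.eventually_ne hc, eventually_ne_atTop 0] with n hne hn
  have hu : u n ≠ 0 := left_ne_zero_of_mul (left_ne_zero_of_mul hne)
  have hn' : (n : ℝ) ≠ 0 := Nat.cast_ne_zero.mpr hn
  rw [log_mul (mul_ne_zero hu (by positivity)) (pow_ne_zero n hα), log_mul hu (by positivity),
    log_rpow (by positivity), log_pow, logGrowth]
  ring

lemma tendsto_div_of_tendsto_logGrowth_sub {m : ℕ → ℕ} (hm : ∀ n, n ≤ m n) {μ a b K : ℝ}
    (ha : a ≠ 0) (hb : b ≠ 0)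
    (h : Tendsto (fun n : ℕ => logGrowth μ a (m n) - logGrowth μ b n) atTop (𝓝 K)) :
    Tendsto (fun n : ℕ => (m n : ℝ) / n) atTop (𝓝 (b / a)) := by
  have hm_top : Tendsto (fun n => (m n : ℝ)) atTop atTop :=
    tendsto_natCast_atTop_atTop.comp (tendsto_atTop_mono hm tendsto_id)
  have hlog_m : Tendsto (fun n => log (m n) / m n) atTop (𝓝 0) :=
    isLittleO_log_id_atTop.tendsto_div_nhds_zero.comp hm_top
  have hlog_n : Tendsto (fun n : ℕ => log n / m n) atTop (𝓝 0) := by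
    refine tendsto_of_tendsto_of_tendsto_of_le_of_le' tendsto_const_nhds hlog_m
      (Eventually.of_forall fun n => by positivity) ?_
    filter_upwards [eventually_ne_atTop 0] with n hn
    gcongr
    exact_mod_cast hm n
  -- Dividing by `m` leaves `b * (n / m) = a + o(1)`.
  have hinv : Tendsto (fun n : ℕ => (n : ℝ) / m n) atTop (𝓝 (a / b)) := by
    have hlim := ((((hlog_m.const_mul μ).sub (hlog_n.const_mul μ)).sub
      (h.div_atTop hm_top)).const_add a).div_const b
    simp only [mul_zero, sub_zero, add_zero] at hlim
    refine hlim.congr' ?_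
    filter_upwards [eventually_ne_atTop 0] with n hn
    have hmn : (m n : ℝ) ≠ 0 := by exact_mod_cast (Nat.pos_of_ne_zero hn).trans_le (hm n) |>.ne'
    simp only [logGrowth]
    field_simp
    ring
  simpa using hinv.inv₀ (div_ne_zero ha hb)

theorem stmt_5_general (μ α₁ α₂ c₁ c₂ : ℝ)
    (hα₁ : 0 < α₁) (hα : α₁ < α₂) (hα₂ : α₂ < 1) (hc₁ : 0 < c₁) (hc₂ : 0 < c₂)
    (R₁ R₂ : ℕ → ℝ)
    (h₁ : Tendsto (fun n : ℕ => R₁ n * (n : ℝ) ^ μ * α₁ ^ n) atTop (nhds c₁))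
    (h₂ : Tendsto (fun n : ℕ => R₂ n * (n : ℝ) ^ μ * α₂ ^ n) atTop (nhds c₂))
    (x : ℕ → ℕ) (L : ℝ) (hL : 0 < L)
    (hconv : Tendsto (fun n : ℕ => R₂ (n + x n) / R₁ n) atTop (nhds L)) :
    Tendsto (fun n : ℕ => (x n : ℝ) / n) atTop
      (nhds (Real.log α₁ / Real.log α₂ - 1)) := by
  have hα₂_pos : 0 < α₂ := hα₁.trans hα
  have hm_top : Tendsto (fun n => n + x n) atTop atTop :=
    tendsto_atTop_mono (fun n => Nat.le_add_right n (x n)) tendsto_id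
  have hbalance : Tendsto (fun n : ℕ => logGrowth μ (log α₂) ((n + x n : ℕ) : ℝ) -
      logGrowth μ (log α₁) n) atTop (𝓝 (log c₂ - log c₁ - log L)) := by
    refine ((((tendsto_log_add_logGrowth hα₂_pos.ne' hc₂.ne' h₂).comp hm_top).sub
      (tendsto_log_add_logGrowth hα₁.ne' hc₁.ne' h₁)).sub (hconv.log hL.ne')).congr' ?_
    filter_upwards [hconv.eventually_ne hL.ne'] with n hn
    obtain ⟨hR₂, hR₁⟩ := div_ne_zero_iff.mp hn
    rw [Function.comp_apply, log_div hR₂ hR₁]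
    ring
  have hratio := tendsto_div_of_tendsto_logGrowth_sub (fun n => Nat.le_add_right n (x n))
    (log_neg hα₂_pos hα₂).ne (log_neg hα₁ (hα.trans hα₂)).ne hbalance
  refine (hratio.sub_const 1).congr' ?_
  filter_upwards [eventually_ne_atTop 0] with n hn
  have hn' : (n : ℝ) ≠ 0 := Nat.cast_ne_zero.mpr hn
  push_cast
  field_simp
  ring

theorem stmt_5 (μ α₁ α₂ c₁ c₂ : ℝ) (hμ : 1 < μ)
    (hα₁ : 0 < α₁) (hα : α₁ < α₂) (hα₂ : α₂ < 1) (hc₁ : 0 < c₁) (hc₂ : 0 < c₂)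
    (R₁ R₂ : ℕ → ℝ)
    (h₁ : Tendsto (fun n : ℕ => R₁ n * (n : ℝ) ^ μ * α₁ ^ n) atTop (nhds c₁))
    (h₂ : Tendsto (fun n : ℕ => R₂ n * (n : ℝ) ^ μ * α₂ ^ n) atTop (nhds c₂))
    (x : ℕ → ℕ) (L : ℝ) (hL : 0 < L)
    (hconv : Tendsto (fun n : ℕ => R₂ (n + x n) / R₁ n) atTop (nhds L)) :
    Tendsto (fun n : ℕ => (x n : ℝ) / n) atTop
      (nhds (Real.log α₁ / Real.log α₂ - 1)) :=
  stmt_5_general μ α₁ α₂ c₁ c₂ hα₁ hα hα₂ hc₁ hc₂ R₁ R₂ h₁ h₂ x L hL hconv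
end

section
/- Let μ > 1, let 0 < α₁ < α₂ < 1 and c₁, c₂ > 0 be real numbers, and let R₁, R₂ : ℕ → ℝ be nonnegative with R_m(0) = 0 and R_m(n)·n^μ·α_m^n → c_m as n → ∞ for m = 1, 2. Fix an integer j ≥ 1 and define β_m(n) to be the coefficient of z^n in (∑_k R_m(k)z^k)^j·(1−z)^{−(j+1)}. Set λ := ln(α₁)/ln(α₂) and x_n := ⌊n(λ−1)⌋. Then there exist real constants 0 < b₁ ≤ b₂ and N ∈ ℕ such that for all n ≥ N, b₁ ≤ β₂(n + x_n)/β₁(n) ≤ b₂. -/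
/-!
Both `β_m(n)` are `Θ(n^{-μ} α_m^{-n})`. For the upper bound, nonnegative series whose
coefficients are bounded by `C n^{-μ} α^{-n}` for all `n` are closed under products, because
`∑_{a+b=n} a^{-μ} b^{-μ} = O(n^{-μ})` when `μ > 1`, and under multiplication by
`(1-z)⁻¹ = 1 + z/(1-z)` when `α < 1`, because `n^μ α^n → 0`. For the lower bound, a coefficient
of a product of nonnegative series dominates each single term `[z^a] f · [z^N] g`.
Finally `n + x_n ≤ λ n < n + x_n + 1` and `α₁ = α₂^λ`, so `α₂^{n + x_n}` lies between
`α₁^n` and `α₁^n / α₂`, and the two weights at `n + x_n` and at `n` are comparable.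
-/

open Filter Finset PowerSeries Asymptotics

lemma isTheta_of_eventually_le_le {ι : Type*} {l : Filter ι} {f g : ι → ℝ} {c C : ℝ}
    (hc : 0 < c) (hg : ∀ᶠ x in l, 0 ≤ g x) (h : ∀ᶠ x in l, c * g x ≤ f x ∧ f x ≤ C * g x) :
    f =Θ[l] g := by
  have hf : ∀ᶠ x in l, 0 ≤ f x := (hg.and h).mono fun x hx => (mul_nonneg hc.le hx.1).trans hx.2.1
  refine ⟨IsBigO.of_bound C ?_, IsBigO.of_bound c⁻¹ ?_⟩ <;>
    filter_upwards [hf, hg, h] with x hfx hgx hx <;>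
    rw [Real.norm_of_nonneg hfx, Real.norm_of_nonneg hgx]
  · exact hx.2
  · rw [le_inv_mul_iff₀ hc]; exact hx.1

lemma Asymptotics.IsTheta.exists_div_bounds {ι : Type*} {l : Filter ι} {f g : ι → ℝ}
    (h : f =Θ[l] g) (hf : ∀ᶠ x in l, 0 ≤ f x) (hg : ∀ᶠ x in l, 0 < g x) :
    ∃ b₁ b₂ : ℝ, 0 < b₁ ∧ b₁ ≤ b₂ ∧ ∀ᶠ x in l, b₁ ≤ f x / g x ∧ f x / g x ≤ b₂ := by
  obtain ⟨C, -, hfg⟩ := h.1.exists_pos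
  obtain ⟨c, hc, hgf⟩ := h.2.exists_pos
  refine ⟨c⁻¹, max c⁻¹ C, inv_pos.2 hc, le_max_left _ _, ?_⟩
  filter_upwards [hfg.bound, hgf.bound, hf, hg] with x hfgx hgfx hfx hgx
  rw [Real.norm_of_nonneg hfx, Real.norm_of_nonneg hgx.le] at hfgx hgfx
  constructor
  · rw [le_div_iff₀ hgx, inv_mul_le_iff₀ hc]; exact hgfx
  · rw [div_le_iff₀ hgx]; exact hfgx.trans (by gcongr; exact le_max_right _ _)

/-- For `μ ≠ 0` this vanishes at `n = 0` (`0 ^ (-μ) = 0`), so a bound `R n ≤ C * weight μ α n`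
forces `R 0 ≤ 0`. -/
noncomputable def weight (μ α : ℝ) (n : ℕ) : ℝ := (n : ℝ) ^ (-μ) / α ^ n

section Weight

variable {μ α : ℝ}

lemma weight_nonneg (hα : 0 < α) (n : ℕ) : 0 ≤ weight μ α n := by
  unfold weight; positivity

lemma weight_pos (hα : 0 < α) {n : ℕ} (hn : 0 < n) : 0 < weight μ α n := by
  unfold weight; positivity

lemma weight_eq_inv (n : ℕ) :
    weight μ α n = ((n : ℝ) ^ μ * α ^ n)⁻¹ := by
  rw [weight, Real.rpow_neg n.cast_nonneg, div_eq_mul_inv, mul_inv]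

lemma le_mul_weight_iff (hα : 0 < α) {n : ℕ} (hn : 0 < n) {a C : ℝ} :
    a ≤ C * weight μ α n ↔ a * n ^ μ * α ^ n ≤ C := by
  rw [weight_eq_inv, ← div_eq_mul_inv, le_div_iff₀ (by positivity), mul_assoc]

lemma mul_weight_le_iff (hα : 0 < α) {n : ℕ} (hn : 0 < n) {a c : ℝ} :
    c * weight μ α n ≤ a ↔ c ≤ a * n ^ μ * α ^ n := by
  rw [weight_eq_inv, ← div_eq_mul_inv, div_le_iff₀ (by positivity), mul_assoc]

lemma pow_mul_weight_add_le (hμ : 0 ≤ μ) (hα : 0 < α) {n : ℕ} (hn : 0 < n) (s : ℕ) :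
    α ^ s * weight μ α (n + s) ≤ weight μ α n := by
  have hpow : (((n + s : ℕ) : ℝ)) ^ (-μ) ≤ (n : ℝ) ^ (-μ) :=
    Real.rpow_le_rpow_of_nonpos (by positivity) (by norm_cast; omega) (by linarith)
  calc α ^ s * weight μ α (n + s) = (((n + s : ℕ) : ℝ)) ^ (-μ) / α ^ n := by
        rw [weight, pow_add]; field_simp
    _ ≤ weight μ α n := by unfold weight; gcongr

/-- The larger of `a` and `b` is at least `(a + b) / 2`. -/
lemma rpow_neg_mul_rpow_neg_le (hμ : 0 < μ) (a b : ℕ) :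
    (a : ℝ) ^ (-μ) * (b : ℝ) ^ (-μ)
      ≤ 2 ^ μ * ((a + b : ℕ) : ℝ) ^ (-μ) * ((a : ℝ) ^ (-μ) + (b : ℝ) ^ (-μ)) := by
  wlog hab : a ≤ b generalizing a b
  · simpa only [mul_comm, add_comm] using this b a (by omega)
  rcases Nat.eq_zero_or_pos b with rfl | hb
  · simp only [Nat.le_zero.1 hab, Nat.cast_zero, Real.zero_rpow (neg_ne_zero.2 hμ.ne')]
    simp
  have hhalf : (b : ℝ) ^ (-μ) ≤ 2 ^ μ * ((a + b : ℕ) : ℝ) ^ (-μ) := by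
    calc (b : ℝ) ^ (-μ) ≤ (((a + b : ℕ) : ℝ) / 2) ^ (-μ) :=
          Real.rpow_le_rpow_of_nonpos (by positivity)
            (by rw [div_le_iff₀ two_pos]; norm_cast; omega) (by linarith)
      _ = 2 ^ μ * ((a + b : ℕ) : ℝ) ^ (-μ) := by
          rw [Real.div_rpow (by positivity) zero_le_two, Real.rpow_neg zero_le_two,
            div_inv_eq_mul, mul_comm]
  have ha : (0 : ℝ) ≤ (a : ℝ) ^ (-μ) := by positivity
  have hb' : (0 : ℝ) ≤ (b : ℝ) ^ (-μ) := by positivity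
  nlinarith

lemma sum_antidiagonal_rpow_neg_mul_le (hμ : 1 < μ) (n : ℕ) :
    ∑ p ∈ antidiagonal n, (p.1 : ℝ) ^ (-μ) * (p.2 : ℝ) ^ (-μ)
      ≤ 2 ^ (μ + 1) * (∑' i : ℕ, (i : ℝ) ^ (-μ)) * (n : ℝ) ^ (-μ) := by
  have hsummable : Summable (fun i : ℕ => (i : ℝ) ^ (-μ)) := Real.summable_nat_rpow.2 (by linarith)
  have hpartial : ∑ p ∈ antidiagonal n, (p.1 : ℝ) ^ (-μ) ≤ ∑' i : ℕ, (i : ℝ) ^ (-μ) := by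
    rw [Nat.sum_antidiagonal_eq_sum_range_succ_mk]
    exact hsummable.sum_le_tsum _ fun i _ => by positivity
  have hpartial' : ∑ p ∈ antidiagonal n, (p.2 : ℝ) ^ (-μ) ≤ ∑' i : ℕ, (i : ℝ) ^ (-μ) := by
    rw [← Nat.sum_antidiagonal_swap]
    exact hpartial
  calc ∑ p ∈ antidiagonal n, (p.1 : ℝ) ^ (-μ) * (p.2 : ℝ) ^ (-μ)
      ≤ ∑ p ∈ antidiagonal n,
          2 ^ μ * (n : ℝ) ^ (-μ) * ((p.1 : ℝ) ^ (-μ) + (p.2 : ℝ) ^ (-μ)) := by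
        refine sum_le_sum fun p hp => ?_
        rw [← mem_antidiagonal.1 hp]
        exact rpow_neg_mul_rpow_neg_le (by linarith) p.1 p.2
    _ = 2 ^ μ * (n : ℝ) ^ (-μ) *
          (∑ p ∈ antidiagonal n, (p.1 : ℝ) ^ (-μ) + ∑ p ∈ antidiagonal n, (p.2 : ℝ) ^ (-μ)) := by
        rw [← mul_sum, sum_add_distrib]
    _ ≤ 2 ^ μ * (n : ℝ) ^ (-μ) * (2 * ∑' i : ℕ, (i : ℝ) ^ (-μ)) := by gcongr; linarith
    _ = 2 ^ (μ + 1) * (∑' i : ℕ, (i : ℝ) ^ (-μ)) * (n : ℝ) ^ (-μ) := by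
        rw [Real.rpow_add_one two_ne_zero]; ring

lemma sum_antidiagonal_weight_mul_weight_le (hμ : 1 < μ) (hα : 0 < α) (n : ℕ) :
    ∑ p ∈ antidiagonal n, weight μ α p.1 * weight μ α p.2
      ≤ 2 ^ (μ + 1) * (∑' i : ℕ, (i : ℝ) ^ (-μ)) * weight μ α n := by
  have hsplit : ∀ p ∈ antidiagonal n, weight μ α p.1 * weight μ α p.2
      = (p.1 : ℝ) ^ (-μ) * (p.2 : ℝ) ^ (-μ) / α ^ n := by
    intro p hp
    rw [weight, weight, div_mul_div_comm, ← pow_add, mem_antidiagonal.1 hp]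
  rw [sum_congr rfl hsplit, ← sum_div, weight, ← mul_div_assoc]
  gcongr
  exact sum_antidiagonal_rpow_neg_mul_le hμ n

end Weight

section Coefficients

variable {μ α : ℝ} {f g : ℝ⟦X⟧}

lemma coeff_mul_nonneg (hf : ∀ n, 0 ≤ coeff n f) (hg : ∀ n, 0 ≤ coeff n g) (n : ℕ) :
    0 ≤ coeff n (f * g) := by
  rw [coeff_mul]
  exact sum_nonneg fun p _ => mul_nonneg (hf p.1) (hg p.2)

lemma coeff_pow_nonneg (hf : ∀ n, 0 ≤ coeff n f) (k n : ℕ) : 0 ≤ coeff n (f ^ k) := by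
  induction k generalizing n with
  | zero => rw [pow_zero, coeff_one]; positivity
  | succ k ih => rw [pow_succ]; exact coeff_mul_nonneg ih hf n

lemma coeff_mul_coeff_le_coeff_mul (hf : ∀ n, 0 ≤ coeff n f) (hg : ∀ n, 0 ≤ coeff n g)
    (a b : ℕ) : coeff a f * coeff b g ≤ coeff (a + b) (f * g) := by
  rw [coeff_mul]
  exact single_le_sum (f := fun p : ℕ × ℕ => coeff p.1 f * coeff p.2 g) (a := (a, b))
    (fun p _ => mul_nonneg (hf p.1) (hg p.2)) (mem_antidiagonal.2 rfl)

/-- The upper bound is required for every `n`, not just eventually, so that it survives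
convolution. -/
def CoeffUpperBound (μ α : ℝ) (f : ℝ⟦X⟧) : Prop :=
  ∃ C, 0 ≤ C ∧ ∀ n, coeff n f ≤ C * weight μ α n

def CoeffLowerBound (μ α : ℝ) (f : ℝ⟦X⟧) : Prop :=
  ∃ c, 0 < c ∧ ∀ᶠ n in atTop, c * weight μ α n ≤ coeff n f

lemma coeffUpperBound_of_forall_le (hα : 0 < α) (h0 : coeff 0 f = 0) {C : ℝ}
    (hC : ∀ n, coeff n f * (n : ℝ) ^ μ * α ^ n ≤ C) : CoeffUpperBound μ α f := by
  have hC0 : 0 ≤ C := by simpa [h0] using hC 0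
  refine ⟨C, hC0, fun n => ?_⟩
  rcases Nat.eq_zero_or_pos n with rfl | hn
  · rw [h0]; exact mul_nonneg hC0 (weight_nonneg hα 0)
  · exact (le_mul_weight_iff hα hn).2 (hC n)

lemma CoeffUpperBound.add (hf : CoeffUpperBound μ α f) (hg : CoeffUpperBound μ α g) :
    CoeffUpperBound μ α (f + g) := by
  obtain ⟨C, hC, hfC⟩ := hf
  obtain ⟨D, hD, hgD⟩ := hg
  refine ⟨C + D, add_nonneg hC hD, fun n => ?_⟩
  rw [map_add, add_mul]
  exact add_le_add (hfC n) (hgD n)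

lemma CoeffUpperBound.mul (hμ : 1 < μ) (hα : 0 < α) (hf0 : ∀ n, 0 ≤ coeff n f)
    (hg0 : ∀ n, 0 ≤ coeff n g) (hf : CoeffUpperBound μ α f) (hg : CoeffUpperBound μ α g) :
    CoeffUpperBound μ α (f * g) := by
  obtain ⟨C, hC, hfC⟩ := hf
  obtain ⟨D, hD, hgD⟩ := hg
  set K := 2 ^ (μ + 1) * ∑' i : ℕ, (i : ℝ) ^ (-μ)
  have hK : 0 ≤ K := mul_nonneg (by positivity) (tsum_nonneg fun i => by positivity)
  refine ⟨C * D * K, by positivity, fun n => ?_⟩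
  rw [coeff_mul]
  calc ∑ p ∈ antidiagonal n, coeff p.1 f * coeff p.2 g
      ≤ ∑ p ∈ antidiagonal n, (C * weight μ α p.1) * (D * weight μ α p.2) :=
        sum_le_sum fun p _ => mul_le_mul (hfC _) (hgD _) (hg0 _) ((hf0 _).trans (hfC _))
    _ = C * D * ∑ p ∈ antidiagonal n, weight μ α p.1 * weight μ α p.2 := by
        rw [mul_sum]; exact sum_congr rfl fun p _ => by ring
    _ ≤ C * D * (K * weight μ α n) := by
        gcongr; exact sum_antidiagonal_weight_mul_weight_le hμ hα n
    _ = C * D * K * weight μ α n := by ring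

lemma CoeffUpperBound.pow (hμ : 1 < μ) (hα : 0 < α) (hf0 : ∀ n, 0 ≤ coeff n f)
    (hf : CoeffUpperBound μ α f) {k : ℕ} (hk : k ≠ 0) : CoeffUpperBound μ α (f ^ k) := by
  induction k, Nat.one_le_iff_ne_zero.2 hk using Nat.le_induction with
  | base => rwa [pow_one]
  | succ k hk ih =>
      rw [pow_succ]
      exact (ih (by omega)).mul hμ hα (coeff_pow_nonneg hf0 k) hf0 hf

lemma inv_one_sub_X_eq_mk_one : ((1 - X : ℝ⟦X⟧))⁻¹ = PowerSeries.mk 1 :=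
  ((PowerSeries.eq_inv_iff_mul_eq_one (by simp)).2 (mk_one_mul_one_sub_eq_one ℝ)).symm

lemma coeff_inv_one_sub_X (n : ℕ) : coeff n ((1 - X : ℝ⟦X⟧))⁻¹ = 1 := by
  rw [inv_one_sub_X_eq_mk_one, coeff_mk, Pi.one_apply]

lemma coeff_inv_one_sub_X_nonneg (n : ℕ) : 0 ≤ coeff n ((1 - X : ℝ⟦X⟧))⁻¹ := by
  rw [coeff_inv_one_sub_X]; exact zero_le_one

lemma coeff_X_mul_inv_one_sub_X (n : ℕ) :
    coeff n (X * (1 - X : ℝ⟦X⟧)⁻¹) = if n = 0 then 0 else 1 := by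
  rcases n with _ | n
  · simp
  · rw [coeff_succ_X_mul, coeff_inv_one_sub_X, if_neg n.succ_ne_zero]

lemma tendsto_rpow_mul_pow_of_lt_one (μ : ℝ) (hα : 0 < α) (hα1 : α < 1) :
    Tendsto (fun n : ℕ => (n : ℝ) ^ μ * α ^ n) atTop (nhds 0) := by
  have h := (tendsto_rpow_mul_exp_neg_mul_atTop_nhds_zero μ (-Real.log α)
    (neg_pos.2 (Real.log_neg hα hα1))).comp tendsto_natCast_atTop_atTop
  refine h.congr fun n => ?_
  rw [Function.comp_apply, neg_neg, mul_comm (Real.log α), Real.exp_nat_mul, Real.exp_log hα]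

lemma coeffUpperBound_X_mul_inv_one_sub_X (hα : 0 < α) (hα1 : α < 1) :
    CoeffUpperBound μ α (X * (1 - X)⁻¹) := by
  obtain ⟨M, hM⟩ := (tendsto_rpow_mul_pow_of_lt_one μ hα hα1).bddAbove_range
  refine coeffUpperBound_of_forall_le hα (by simp [coeff_X_mul_inv_one_sub_X]) (C := M)
    fun n => ?_
  rw [coeff_X_mul_inv_one_sub_X, mul_assoc]
  refine le_trans ?_ (hM ⟨n, rfl⟩)
  split_ifs <;> simp only [zero_mul, one_mul, le_refl]; positivity

lemma CoeffUpperBound.mul_inv_one_sub_X (hμ : 1 < μ) (hα : 0 < α) (hα1 : α < 1)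
    (hf0 : ∀ n, 0 ≤ coeff n f) (hf : CoeffUpperBound μ α f) :
    CoeffUpperBound μ α (f * (1 - X)⁻¹) := by
  have hsplit : f * (1 - X)⁻¹ = f + f * (X * (1 - X)⁻¹) := by
    rw [← mul_one_add]
    congr 1
    ext n
    rw [map_add, coeff_one, coeff_X_mul_inv_one_sub_X, coeff_inv_one_sub_X]
    split_ifs <;> norm_num
  rw [hsplit]
  refine hf.add (hf.mul hμ hα hf0 (fun n => ?_) (coeffUpperBound_X_mul_inv_one_sub_X hα hα1))
  rw [coeff_X_mul_inv_one_sub_X]; positivity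

lemma CoeffUpperBound.mul_inv_one_sub_X_pow (hμ : 1 < μ) (hα : 0 < α) (hα1 : α < 1)
    (hf0 : ∀ n, 0 ≤ coeff n f) (hf : CoeffUpperBound μ α f) (i : ℕ) :
    CoeffUpperBound μ α (f * ((1 - X)⁻¹) ^ i) := by
  induction i with
  | zero => rwa [pow_zero, mul_one]
  | succ i ih =>
      rw [pow_succ, ← mul_assoc]
      exact ih.mul_inv_one_sub_X hμ hα hα1
        (coeff_mul_nonneg hf0 (coeff_pow_nonneg coeff_inv_one_sub_X_nonneg i))

lemma CoeffLowerBound.exists_coeff_pos (hα : 0 < α) (hf : CoeffLowerBound μ α f) :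
    ∃ N, 0 < coeff N f := by
  obtain ⟨c, hc, hfc⟩ := hf
  obtain ⟨N, hN, hNpos⟩ := (hfc.and (eventually_gt_atTop 0)).exists
  exact ⟨N, lt_of_lt_of_le (mul_pos hc (weight_pos hα hNpos)) hN⟩

lemma CoeffLowerBound.mul (hμ : 0 ≤ μ) (hα : 0 < α) (hf0 : ∀ n, 0 ≤ coeff n f)
    (hg0 : ∀ n, 0 ≤ coeff n g) (hf : CoeffLowerBound μ α f) {N : ℕ} (hN : 0 < coeff N g) :
    CoeffLowerBound μ α (f * g) := by
  obtain ⟨c, hc, hfc⟩ := hf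
  obtain ⟨M, hM⟩ := eventually_atTop.1 hfc
  refine ⟨c * coeff N g * α ^ N, by positivity, ?_⟩
  filter_upwards [eventually_ge_atTop (M + N + 1)] with n hn
  obtain ⟨a, rfl⟩ : ∃ a, n = a + N := ⟨n - N, by omega⟩
  calc c * coeff N g * α ^ N * weight μ α (a + N)
      = c * (α ^ N * weight μ α (a + N)) * coeff N g := by ring
    _ ≤ c * weight μ α a * coeff N g := by
        gcongr; exact pow_mul_weight_add_le hμ hα (by omega) N
    _ ≤ coeff a f * coeff N g := by gcongr; exact hM a (by omega)
    _ ≤ coeff (a + N) (f * g) := coeff_mul_coeff_le_coeff_mul hf0 hg0 a N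

lemma CoeffLowerBound.pow (hμ : 0 ≤ μ) (hα : 0 < α) (hf0 : ∀ n, 0 ≤ coeff n f)
    (hf : CoeffLowerBound μ α f) {k : ℕ} (hk : k ≠ 0) : CoeffLowerBound μ α (f ^ k) := by
  obtain ⟨N, hN⟩ := hf.exists_coeff_pos hα
  induction k, Nat.one_le_iff_ne_zero.2 hk using Nat.le_induction with
  | base => rwa [pow_one]
  | succ k hk ih =>
      rw [pow_succ]
      exact (ih (by omega)).mul hμ hα (coeff_pow_nonneg hf0 k) hf0 hN

end Coefficients

section GeneratingFunctions

variable {μ α : ℝ} {R : ℕ → ℝ} {c : ℝ}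

lemma coeffUpperBound_mk_of_tendsto (hα : 0 < α) (hR0 : R 0 = 0)
    (h : Tendsto (fun n : ℕ => R n * (n : ℝ) ^ μ * α ^ n) atTop (nhds c)) :
    CoeffUpperBound μ α (PowerSeries.mk R) := by
  obtain ⟨C, hC⟩ := h.bddAbove_range
  exact coeffUpperBound_of_forall_le hα (by rwa [coeff_mk]) fun n => by
    rw [coeff_mk]; exact hC ⟨n, rfl⟩

lemma coeffLowerBound_mk_of_tendsto (hα : 0 < α) (hc : 0 < c)
    (h : Tendsto (fun n : ℕ => R n * (n : ℝ) ^ μ * α ^ n) atTop (nhds c)) :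
    CoeffLowerBound μ α (PowerSeries.mk R) := by
  refine ⟨c / 2, half_pos hc, ?_⟩
  filter_upwards [h.eventually (eventually_ge_nhds (half_lt_self hc)), eventually_gt_atTop 0]
    with n hn hn0
  rw [coeff_mk]
  exact (mul_weight_le_iff hα hn0).2 hn

lemma coeff_mk_pow_mul_inv_one_sub_X_pow_nonneg (hR : ∀ n, 0 ≤ R n) (j i n : ℕ) :
    0 ≤ coeff n (PowerSeries.mk R ^ j * ((1 - X)⁻¹) ^ i) :=
  coeff_mul_nonneg (coeff_pow_nonneg (fun n => by rw [coeff_mk]; exact hR n) j)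
    (coeff_pow_nonneg coeff_inv_one_sub_X_nonneg i) n

lemma isTheta_coeff_pow_mul_inv_one_sub_X_pow (hμ : 1 < μ) (hα : 0 < α) (hα1 : α < 1)
    (hR0 : R 0 = 0) (hR : ∀ n, 0 ≤ R n) (hc : 0 < c)
    (h : Tendsto (fun n : ℕ => R n * (n : ℝ) ^ μ * α ^ n) atTop (nhds c))
    {j : ℕ} (hj : j ≠ 0) (i : ℕ) :
    (fun n => coeff n (PowerSeries.mk R ^ j * ((1 - X)⁻¹) ^ i)) =Θ[atTop] weight μ α := by
  have hR' : ∀ n, 0 ≤ coeff n (PowerSeries.mk R) := fun n => by rw [coeff_mk]; exact hR n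
  have hinv_pow_zero : 0 < coeff 0 (((1 - X : ℝ⟦X⟧)⁻¹) ^ i) := by
    rw [coeff_zero_eq_constantCoeff_apply, map_pow, ← coeff_zero_eq_constantCoeff_apply,
      coeff_inv_one_sub_X, one_pow]
    exact one_pos
  obtain ⟨C, -, hupper⟩ := ((coeffUpperBound_mk_of_tendsto hα hR0 h).pow hμ hα hR' hj
    ).mul_inv_one_sub_X_pow hμ hα hα1 (coeff_pow_nonneg hR' j) i
  obtain ⟨c', hc', hlower⟩ := ((coeffLowerBound_mk_of_tendsto hα hc h).pow (by linarith) hα hR' hj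
    ).mul (by linarith) hα (coeff_pow_nonneg hR' j)
      (coeff_pow_nonneg coeff_inv_one_sub_X_nonneg i) hinv_pow_zero
  exact isTheta_of_eventually_le_le hc' (.of_forall (weight_nonneg hα))
    (hlower.mono fun n hn => ⟨hn, hupper n⟩)

end GeneratingFunctions

lemma floor_shift_bounds {lam : ℝ} (hlam : 1 ≤ lam) (n : ℕ) :
    ((n + ⌊(n : ℝ) * (lam - 1)⌋₊ : ℕ) : ℝ) ≤ n * lam ∧
      (n : ℝ) * lam < (n + ⌊(n : ℝ) * (lam - 1)⌋₊ : ℕ) + 1 := by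
  have hfloor := Nat.floor_le (mul_nonneg n.cast_nonneg (sub_nonneg.2 hlam))
  have hfloor' := Nat.lt_floor_add_one ((n : ℝ) * (lam - 1))
  push_cast
  constructor <;> linarith

/-- `α₂ ^ m n` lies between `α₁ ^ n` and `α₁ ^ n / α₂`. -/
lemma isTheta_weight_comp {μ α₁ α₂ lam : ℝ} (hμ : 0 ≤ μ) (hα₁ : 0 < α₁) (hα₂ : 0 < α₂)
    (hα₂1 : α₂ < 1) (hlog : lam * Real.log α₂ = Real.log α₁) {m : ℕ → ℕ}
    (hnm : ∀ n, n ≤ m n) (hm : ∀ n, (m n : ℝ) ≤ n * lam ∧ n * lam < m n + 1) :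
    (fun n => weight μ α₂ (m n)) =Θ[atTop] weight μ α₁ := by
  have hlam : 0 < lam := by
    have h1 : (1 : ℝ) ≤ m 1 := by exact_mod_cast hnm 1
    have h2 := (hm 1).1
    rw [Nat.cast_one, one_mul] at h2
    linarith
  have hlog₂ : Real.log α₂ < 0 := Real.log_neg hα₂ hα₂1
  have hpow : ∀ n, α₂ ^ m n * α₂ ≤ α₁ ^ n ∧ α₁ ^ n ≤ α₂ ^ m n := fun n => by
    rw [← pow_succ]
    constructor <;>
      rw [← Real.log_le_log_iff (by positivity) (by positivity), Real.log_pow, Real.log_pow,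
        ← hlog] <;> push_cast <;> nlinarith [hm n]
  refine isTheta_of_eventually_le_le (c := α₂ * lam ^ (-μ)) (C := 1) (by positivity)
    (.of_forall (weight_nonneg hα₁)) ?_
  filter_upwards [eventually_gt_atTop 0] with n hn
  have hmn : 0 < m n := hn.trans_le (hnm n)
  constructor
  · calc α₂ * lam ^ (-μ) * weight μ α₁ n = ((n : ℝ) * lam) ^ (-μ) * (α₂ / α₁ ^ n) := by
          rw [weight, Real.mul_rpow n.cast_nonneg hlam.le]; ring
      _ ≤ (m n : ℝ) ^ (-μ) * (α₂ ^ m n)⁻¹ := by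
          gcongr ?_ * ?_
          · exact Real.rpow_le_rpow_of_nonpos (by positivity) (hm n).1 (by linarith)
          · rw [div_le_iff₀ (by positivity), ← div_eq_inv_mul, le_div_iff₀ (by positivity)]
            linarith [(hpow n).1]
      _ = weight μ α₂ (m n) := by rw [weight, div_eq_mul_inv]
  · rw [one_mul, weight, weight]
    exact div_le_div₀ (by positivity)
      (Real.rpow_le_rpow_of_nonpos (by positivity) (by exact_mod_cast hnm n) (by linarith))
      (by positivity) (hpow n).2

lemma isTheta_weight_add_floor {μ α₁ α₂ : ℝ} (hμ : 0 ≤ μ) (hα₁ : 0 < α₁) (hα : α₁ < α₂)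
    (hα₂ : α₂ < 1) :
    (fun n : ℕ => weight μ α₂ (n + ⌊(n : ℝ) * (Real.log α₁ / Real.log α₂ - 1)⌋₊))
      =Θ[atTop] weight μ α₁ := by
  have hα₂0 : 0 < α₂ := hα₁.trans hα
  have hlog₂ : Real.log α₂ < 0 := Real.log_neg hα₂0 hα₂
  have hlam : 1 ≤ Real.log α₁ / Real.log α₂ := by
    rw [le_div_iff_of_neg hlog₂, one_mul]
    exact (Real.log_lt_log hα₁ hα).le
  exact isTheta_weight_comp hμ hα₁ hα₂0 hα₂ (div_mul_cancel₀ _ hlog₂.ne)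
    (fun n => Nat.le_add_right _ _) (floor_shift_bounds hlam)

theorem stmt_6 (μ α₁ α₂ c₁ c₂ : ℝ) (hμ : 1 < μ)
    (hα₁ : 0 < α₁) (hα : α₁ < α₂) (hα₂ : α₂ < 1) (hc₁ : 0 < c₁) (hc₂ : 0 < c₂)
    (R₁ R₂ : ℕ → ℝ) (h₁0 : R₁ 0 = 0) (h₂0 : R₂ 0 = 0)
    (h₁pos : ∀ n, 0 ≤ R₁ n) (h₂pos : ∀ n, 0 ≤ R₂ n)
    (h₁ : Tendsto (fun n : ℕ => R₁ n * (n : ℝ) ^ μ * α₁ ^ n) atTop (nhds c₁))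
    (h₂ : Tendsto (fun n : ℕ => R₂ n * (n : ℝ) ^ μ * α₂ ^ n) atTop (nhds c₂))
    (j : ℕ) (hj : 1 ≤ j)
    (β₁ β₂ : ℕ → ℝ)
    (hβ₁ : ∀ n, β₁ n = PowerSeries.coeff n
      ((PowerSeries.mk R₁) ^ j * ((1 - PowerSeries.X)⁻¹) ^ (j + 1)))
    (hβ₂ : ∀ n, β₂ n = PowerSeries.coeff n
      ((PowerSeries.mk R₂) ^ j * ((1 - PowerSeries.X)⁻¹) ^ (j + 1)))
    (lam : ℝ) (hlam : lam = Real.log α₁ / Real.log α₂)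
    (x : ℕ → ℕ) (hx : ∀ n, x n = ⌊(n : ℝ) * (lam - 1)⌋₊) :
    ∃ b₁ b₂ : ℝ, 0 < b₁ ∧ b₁ ≤ b₂ ∧ ∃ N : ℕ, ∀ n ≥ N,
      b₁ ≤ β₂ (n + x n) / β₁ n ∧ β₂ (n + x n) / β₁ n ≤ b₂ := by
  have hα₂0 : 0 < α₂ := hα₁.trans hα
  have hΘ₁ : β₁ =Θ[atTop] weight μ α₁ := by
    rw [funext hβ₁]
    exact isTheta_coeff_pow_mul_inv_one_sub_X_pow hμ hα₁ (hα.trans hα₂) h₁0 h₁pos hc₁ h₁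
      (by omega) _
  have hΘ₂ : β₂ =Θ[atTop] weight μ α₂ := by
    rw [funext hβ₂]
    exact isTheta_coeff_pow_mul_inv_one_sub_X_pow hμ hα₂0 hα₂ h₂0 h₂pos hc₂ h₂ (by omega) _
  have hweight : (fun n => weight μ α₂ (n + x n)) =Θ[atTop] weight μ α₁ := by
    simpa only [hx, hlam] using isTheta_weight_add_floor (by linarith) hα₁ hα hα₂
  have hshift : Tendsto (fun n => n + x n) atTop atTop :=
    tendsto_atTop_mono (fun n => Nat.le_add_right n (x n)) tendsto_id
  have hβ₁pos : ∀ᶠ n in atTop, 0 < β₁ n := by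
    filter_upwards [hΘ₁.eq_zero_iff, eventually_gt_atTop 0] with n hn hn0
    rw [hβ₁ n] at hn ⊢
    exact (coeff_mk_pow_mul_inv_one_sub_X_pow_nonneg h₁pos j _ n).lt_of_ne'
      fun h => (weight_pos hα₁ hn0).ne' (hn.1 h)
  have hΘ₂shift : (fun n => β₂ (n + x n)) =Θ[atTop] fun n => weight μ α₂ (n + x n) :=
    ⟨hΘ₂.1.comp_tendsto hshift, hΘ₂.2.comp_tendsto hshift⟩
  obtain ⟨b₁, b₂, hb₁, hb₁₂, hb⟩ := ((hΘ₂shift.trans hweight).trans hΘ₁.symm).exists_div_bounds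
      (.of_forall fun n => hβ₂ _ ▸ coeff_mk_pow_mul_inv_one_sub_X_pow_nonneg h₂pos j _ _) hβ₁pos
  exact ⟨b₁, b₂, hb₁, hb₁₂, eventually_atTop.1 hb⟩
end

section
/- Let μ > 1, 0 < α < 1 and c > 0 be real numbers, and let r : ℕ → ℝ be nonnegative with r(0) = 0 and r(n)·n^μ·α^n → c as n → ∞. Define δ₁(n) := ∑_{x=0}^n (n − x + 1)·r(x) and, for 0 ≤ x ≤ n, p_n(x) := (n − x + 1)·r(x)/δ₁(n). Then: (i) δ₁(n)·n^μ·α^n → c/(1−α)² as n → ∞; and (ii) for any sequence (x_n) with 0 ≤ x_n ≤ n and liminf_{n→∞} p_n(x_n) > 0, the sequence (n − x_n) is bounded. -/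
/-!
Reflecting the sum, `δ₁(n) n^μ α^n = ∑_{j ≤ n} (j + 1) α^j · r(n - j) n^μ α^(n - j)`. For fixed `j`
the `j`-th summand tends to `(j + 1) α^j c`, and since `n ≤ (n - j + 1)(j + 1)` it is bounded by
`K (j + 1)^(μ + 1) α^j` uniformly in `n`, where `K` bounds `r(m) (m + 1)^μ α^m`. This bound is
summable, so Tannery's theorem gives (i), with `∑ (j + 1) α^j = (1 - α)^(-2)`.

The same bound shows `p_n(n - j) = O((j + 1)^(μ + 1) α^j)` uniformly in `n`, and the right-hand
side tends to `0` as `j → ∞`; so `p_n(x_n)` can stay away from `0` only if `n - x_n` stays bounded.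
-/

open Filter Topology Finset

theorem tendsto_mul_add_rpow_of_tendsto_mul_rpow {a : ℕ → ℝ} {μ c : ℝ} (k : ℝ)
    (h : Tendsto (fun n => a n * (n : ℝ) ^ μ) atTop (𝓝 c)) :
    Tendsto (fun n => a n * ((n : ℝ) + k) ^ μ) atTop (𝓝 c) := by
  have hq : Tendsto (fun n : ℕ => 1 + k / n) atTop (𝓝 1) := by
    simpa using (tendsto_const_div_atTop_nhds_zero_nat k).const_add 1
  have hlim := h.mul (hq.rpow_const (p := μ) (Or.inl one_ne_zero))
  rw [Real.one_rpow, mul_one] at hlim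
  refine hlim.congr' ?_
  filter_upwards [hq.eventually (eventually_gt_nhds one_pos), eventually_gt_atTop 0]
    with n hpos hn
  have hn' : (0 : ℝ) < n := Nat.cast_pos.mpr hn
  rw [mul_assoc, ← Real.mul_rpow hn'.le (by linarith)]
  congr 2
  field_simp

theorem sum_range_sub_add_one_mul_eq (r : ℕ → ℝ) (n : ℕ) :
    ∑ x ∈ range (n + 1), ((n : ℝ) - x + 1) * r x
      = ∑ j ∈ range (n + 1), ((j : ℝ) + 1) * r (n - j) := by
  rw [← sum_range_reflect]
  refine sum_congr rfl fun j hj => ?_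
  have hj : j ≤ n := Nat.lt_succ_iff.mp (mem_range.mp hj)
  rw [Nat.add_sub_cancel, Nat.cast_sub hj]
  ring

section

variable {r : ℕ → ℝ} {μ α c K : ℝ}

theorem tendsto_mul_rpow_mul_pow_sub
    (hr : Tendsto (fun n => r n * (n : ℝ) ^ μ * α ^ n) atTop (𝓝 c)) (j : ℕ) :
    Tendsto (fun n => r (n - j) * (n : ℝ) ^ μ * α ^ (n - j)) atTop (𝓝 c) := by
  rw [← tendsto_add_atTop_iff_nat j]
  simp only [Nat.add_sub_cancel, Nat.cast_add, mul_right_comm _ _ (α ^ _)] at hr ⊢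
  exact tendsto_mul_add_rpow_of_tendsto_mul_rpow (j : ℝ) hr

theorem exists_abs_mul_add_one_rpow_mul_pow_le (hα : 0 < α)
    (hr : Tendsto (fun n => r n * (n : ℝ) ^ μ * α ^ n) atTop (𝓝 c)) :
    ∃ K, ∀ m : ℕ, |r m| * ((m : ℝ) + 1) ^ μ * α ^ m ≤ K := by
  simp only [mul_right_comm _ _ (α ^ _)] at hr
  obtain ⟨K, hK⟩ := (tendsto_mul_add_rpow_of_tendsto_mul_rpow 1 hr).norm.bddAbove_range
  refine ⟨K, fun m => le_of_eq_of_le ?_ (hK ⟨m, rfl⟩)⟩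
  have : 0 ≤ (m : ℝ) + 1 := by positivity
  simp only [norm_mul, Real.norm_eq_abs, abs_pow, abs_of_pos hα, Real.abs_rpow_of_nonneg this,
    abs_of_nonneg this]
  ring

theorem abs_mul_rpow_mul_pow_sub_le (hμ : 0 ≤ μ) (hα : 0 < α)
    (hK : ∀ m : ℕ, |r m| * ((m : ℝ) + 1) ^ μ * α ^ m ≤ K) {n j : ℕ} (hj : j ≤ n) :
    |r (n - j)| * (n : ℝ) ^ μ * α ^ n ≤ K * ((j : ℝ) + 1) ^ μ * α ^ j := by
  have hn : (n : ℝ) ≤ ((n - j : ℕ) + 1) * ((j : ℝ) + 1) := by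
    rw [Nat.cast_sub hj]; nlinarith [(Nat.cast_le (α := ℝ)).mpr hj]
  have hpow : (n : ℝ) ^ μ ≤ (((n - j : ℕ) : ℝ) + 1) ^ μ * ((j : ℝ) + 1) ^ μ := by
    rw [← Real.mul_rpow (by positivity) (by positivity)]
    exact Real.rpow_le_rpow (Nat.cast_nonneg n) hn hμ
  calc |r (n - j)| * (n : ℝ) ^ μ * α ^ n
      ≤ |r (n - j)| * ((((n - j : ℕ) : ℝ) + 1) ^ μ * ((j : ℝ) + 1) ^ μ) * α ^ n := by
        gcongr
    _ = (|r (n - j)| * (((n - j : ℕ) : ℝ) + 1) ^ μ * α ^ (n - j)) *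
          (((j : ℝ) + 1) ^ μ * α ^ j) := by
        rw [← pow_sub_mul_pow α hj]; ring
    _ ≤ K * ((j : ℝ) + 1) ^ μ * α ^ j := by
        rw [mul_assoc K]; gcongr; exact hK _

theorem tendsto_sum_range_mul_sub_mul_rpow_mul_pow {w : ℕ → ℝ} (hμ : 0 ≤ μ) (hα : 0 < α)
    (hr : Tendsto (fun n => r n * (n : ℝ) ^ μ * α ^ n) atTop (𝓝 c))
    (hw : Summable fun j : ℕ => |w j| * ((j : ℝ) + 1) ^ μ * α ^ j) :
    Tendsto (fun n => (∑ j ∈ range (n + 1), w j * r (n - j)) * (n : ℝ) ^ μ * α ^ n) atTop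
      (𝓝 ((∑' j, w j * α ^ j) * c)) := by
  obtain ⟨K, hK⟩ := exists_abs_mul_add_one_rpow_mul_pow_le hα hr
  have hK0 : 0 ≤ K := le_trans (by positivity) (hK 0)
  set F : ℕ → ℕ → ℝ := fun n j => if j ≤ n then w j * r (n - j) * (n : ℝ) ^ μ * α ^ n else 0
  have hF : ∀ n,
      (∑ j ∈ range (n + 1), w j * r (n - j)) * (n : ℝ) ^ μ * α ^ n = ∑' j, F n j := by
    intro n
    rw [tsum_eq_sum (s := range (n + 1)) fun j hj => if_neg (by simpa using hj), sum_mul, sum_mul]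
    exact sum_congr rfl fun j hj => (if_pos (Nat.lt_succ_iff.mp (mem_range.mp hj))).symm
  have hlim : ∀ j, Tendsto (fun n => F n j) atTop (𝓝 (w j * α ^ j * c)) := by
    intro j
    refine ((tendsto_mul_rpow_mul_pow_sub hr j).const_mul (w j * α ^ j)).congr' ?_
    filter_upwards [eventually_ge_atTop j] with n hj
    simp only [F, if_pos hj, ← pow_sub_mul_pow α hj]
    ring
  have hbound : ∀ n j, ‖F n j‖ ≤ K * (|w j| * ((j : ℝ) + 1) ^ μ * α ^ j) := by
    intro n j
    simp only [F]
    split_ifs with hj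
    · calc ‖w j * r (n - j) * (n : ℝ) ^ μ * α ^ n‖
          = |w j| * (|r (n - j)| * (n : ℝ) ^ μ * α ^ n) := by
            simp only [Real.norm_eq_abs, abs_mul, abs_pow, abs_of_pos hα,
              Real.abs_rpow_of_nonneg (Nat.cast_nonneg n), Nat.abs_cast]
            ring
        _ ≤ |w j| * (K * ((j : ℝ) + 1) ^ μ * α ^ j) :=
            mul_le_mul_of_nonneg_left (abs_mul_rpow_mul_pow_sub_le hμ hα hK hj) (abs_nonneg _)
        _ = K * (|w j| * ((j : ℝ) + 1) ^ μ * α ^ j) := by ring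
    · rw [norm_zero]; positivity
  have := tendsto_tsum_of_dominated_convergence (hw.mul_left K) hlim (.of_forall hbound)
  rw [tsum_mul_right] at this
  exact this.congr fun n => (hF n).symm

theorem tsum_add_one_mul_geometric (hα : ‖α‖ < 1) :
    ∑' j : ℕ, ((j : ℝ) + 1) * α ^ j = 1 / (1 - α) ^ 2 := by
  simpa using tsum_choose_mul_geometric_of_norm_lt_one 1 hα

theorem summable_add_one_pow_mul_geometric (k : ℕ) (hα0 : 0 < α) (hα1 : α < 1) :
    Summable fun j : ℕ => ((j : ℝ) + 1) ^ k * α ^ j := by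
  have := (summable_nat_add_iff 1).mpr
    (summable_pow_mul_geometric_of_norm_lt_one (R := ℝ) k (by rwa [Real.norm_of_nonneg hα0.le]))
  refine (this.mul_left α⁻¹).congr fun j => ?_
  rw [Nat.cast_succ, pow_succ α j]
  field_simp

theorem summable_add_one_mul_add_one_rpow_mul_geometric (hα0 : 0 < α) (hα1 : α < 1) (μ : ℝ) :
    Summable fun j : ℕ => ((j : ℝ) + 1) * ((j : ℝ) + 1) ^ μ * α ^ j := by
  refine (summable_add_one_pow_mul_geometric (⌈μ⌉₊ + 1) hα0 hα1).of_nonneg_of_le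
    (fun j => by positivity) fun j => ?_
  have h1 : (1 : ℝ) ≤ (j : ℝ) + 1 := by simp
  calc ((j : ℝ) + 1) * ((j : ℝ) + 1) ^ μ * α ^ j
      ≤ ((j : ℝ) + 1) * ((j : ℝ) + 1) ^ (⌈μ⌉₊ : ℝ) * α ^ j := by
        gcongr; exact Nat.le_ceil μ
    _ = ((j : ℝ) + 1) ^ (⌈μ⌉₊ + 1) * α ^ j := by rw [Real.rpow_natCast, pow_succ']

theorem exists_eventually_add_one_mul_sub_div_le (hμ : 0 ≤ μ) (hα : 0 < α)
    (hr : Tendsto (fun n => r n * (n : ℝ) ^ μ * α ^ n) atTop (𝓝 c)) {δ : ℕ → ℝ} {L : ℝ}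
    (hL : 0 < L) (hδ : Tendsto (fun n => δ n * (n : ℝ) ^ μ * α ^ n) atTop (𝓝 L)) :
    ∃ C, ∀ᶠ n in atTop, ∀ j : ℕ, j ≤ n →
      ((j : ℝ) + 1) * r (n - j) / δ n ≤ C * (((j : ℝ) + 1) * ((j : ℝ) + 1) ^ μ * α ^ j) := by
  obtain ⟨K, hK⟩ := exists_abs_mul_add_one_rpow_mul_pow_le hα hr
  refine ⟨2 * K / L, ?_⟩
  filter_upwards [hδ.eventually (eventually_gt_nhds (half_lt_self hL)), eventually_gt_atTop 0]
    with n hδn hn j hj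
  have hs : 0 < (n : ℝ) ^ μ * α ^ n := by positivity
  have hK0 : 0 ≤ K := le_trans (by positivity) (hK 0)
  have hnum : ((j : ℝ) + 1) * r (n - j) * ((n : ℝ) ^ μ * α ^ n)
      ≤ ((j : ℝ) + 1) * (K * ((j : ℝ) + 1) ^ μ * α ^ j) := by
    rw [mul_assoc, ← mul_assoc (r _)]
    refine mul_le_mul_of_nonneg_left ?_ (by positivity)
    calc r (n - j) * (n : ℝ) ^ μ * α ^ n ≤ |r (n - j)| * (n : ℝ) ^ μ * α ^ n := by
          gcongr; exact le_abs_self _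
      _ ≤ K * ((j : ℝ) + 1) ^ μ * α ^ j := abs_mul_rpow_mul_pow_sub_le hμ hα hK hj
  calc ((j : ℝ) + 1) * r (n - j) / δ n
      = ((j : ℝ) + 1) * r (n - j) * ((n : ℝ) ^ μ * α ^ n) / (δ n * ((n : ℝ) ^ μ * α ^ n)) :=
        (mul_div_mul_right _ _ hs.ne').symm
    _ ≤ ((j : ℝ) + 1) * (K * ((j : ℝ) + 1) ^ μ * α ^ j) / (L / 2) :=
        div_le_div₀ (by positivity) hnum (half_pos hL) (by rw [← mul_assoc]; exact hδn.le)
    _ = 2 * K / L * (((j : ℝ) + 1) * ((j : ℝ) + 1) ^ μ * α ^ j) := by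
        field_simp

end

theorem isBoundedUnder_le_of_le_comp_of_liminf_pos {ι : Type*} {l : Filter ι} {f : ι → ℝ}
    {v : ℕ → ℝ} {j : ι → ℕ} (hv : Tendsto v atTop (𝓝 0)) (hf : ∀ i, 0 ≤ f i)
    (hfv : ∀ᶠ i in l, f i ≤ v (j i)) (hlim : 0 < liminf f l) :
    IsBoundedUnder (· ≤ ·) l j := by
  obtain ⟨D, hD⟩ := eventually_atTop.mp (hv.eventually (gt_mem_nhds (half_pos hlim)))
  refine isBoundedUnder_of_eventually_le (a := D) ?_
  filter_upwards [eventually_lt_of_lt_liminf (half_lt_self hlim) (isBoundedUnder_of ⟨0, hf⟩), hfv]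
    with i hlt hle
  by_contra! hDj
  exact (hlt.trans_le hle).not_gt (hD _ hDj.le)

theorem stmt_9_general (μ α c : ℝ) (hμ : 1 < μ) (hα0 : 0 < α) (hα1 : α < 1) (hc : 0 < c)
    (r : ℕ → ℝ) (hrpos : ∀ n, 0 ≤ r n)
    (hasym : Tendsto (fun n : ℕ => r n * (n : ℝ) ^ μ * α ^ n) atTop (nhds c))
    (δ₁ : ℕ → ℝ)
    (hδ₁ : ∀ n, δ₁ n = ∑ x ∈ Finset.range (n + 1), ((n : ℝ) - x + 1) * r x)
    (p : ℕ → ℕ → ℝ)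
    (hp : ∀ n x, p n x = ((n : ℝ) - x + 1) * r x / δ₁ n) :
    Tendsto (fun n : ℕ => δ₁ n * (n : ℝ) ^ μ * α ^ n) atTop
        (nhds (c / (1 - α) ^ 2)) ∧
      ∀ x : ℕ → ℕ, (∀ n, x n ≤ n) →
        0 < atTop.liminf (fun n => p n (x n)) →
        ∃ B : ℕ, ∀ n, n - x n ≤ B := by
  have hμ0 : 0 ≤ μ := by linarith
  have hweight := summable_add_one_mul_add_one_rpow_mul_geometric hα0 hα1 μ
  have hlim : Tendsto (fun n : ℕ => δ₁ n * (n : ℝ) ^ μ * α ^ n) atTop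
      (𝓝 (c / (1 - α) ^ 2)) := by
    have := tendsto_sum_range_mul_sub_mul_rpow_mul_pow (w := fun j => (j : ℝ) + 1) hμ0 hα0 hasym
      (hweight.congr fun j => by rw [abs_of_nonneg (by positivity)])
    rw [tsum_add_one_mul_geometric (by rwa [Real.norm_of_nonneg hα0.le]),
      one_div_mul_eq_div] at this
    simpa only [hδ₁, sum_range_sub_add_one_mul_eq] using this
  refine ⟨hlim, fun x hx hliminf => ?_⟩
  have hL : 0 < c / (1 - α) ^ 2 := div_pos hc (pow_pos (sub_pos.mpr hα1) 2)
  obtain ⟨C, hC⟩ := exists_eventually_add_one_mul_sub_div_le hμ0 hα0 hasym hL hlim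
  set v : ℕ → ℝ := fun i => C * (((i : ℝ) + 1) * ((i : ℝ) + 1) ^ μ * α ^ i)
  have hv : Tendsto v atTop (𝓝 0) := by simpa using hweight.tendsto_atTop_zero.const_mul C
  have hpx : ∀ᶠ n in atTop, p n (x n) ≤ v (n - x n) := by
    filter_upwards [hC] with n hn
    have := hn (n - x n) (Nat.sub_le _ _)
    rw [Nat.sub_sub_self (hx n)] at this
    rwa [hp, ← Nat.cast_sub (hx n)]
  have hp0 : ∀ n, 0 ≤ p n (x n) := fun n => by
    rw [hp, ← Nat.cast_sub (hx n), hδ₁, sum_range_sub_add_one_mul_eq]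
    exact div_nonneg (mul_nonneg (by positivity) (hrpos _))
      (sum_nonneg fun j _ => mul_nonneg (by positivity) (hrpos _))
  obtain ⟨B, hB⟩ :=
    (isBoundedUnder_le_of_le_comp_of_liminf_pos hv hp0 hpx hliminf).bddAbove_range
  exact ⟨B, fun n => hB ⟨n, rfl⟩⟩

theorem stmt_9 (μ α c : ℝ) (hμ : 1 < μ) (hα0 : 0 < α) (hα1 : α < 1) (hc : 0 < c)
    (r : ℕ → ℝ) (hr0 : r 0 = 0) (hrpos : ∀ n, 0 ≤ r n)
    (hasym : Tendsto (fun n : ℕ => r n * (n : ℝ) ^ μ * α ^ n) atTop (nhds c))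
    (δ₁ : ℕ → ℝ)
    (hδ₁ : ∀ n, δ₁ n = ∑ x ∈ Finset.range (n + 1), ((n : ℝ) - x + 1) * r x)
    (p : ℕ → ℕ → ℝ)
    (hp : ∀ n x, p n x = ((n : ℝ) - x + 1) * r x / δ₁ n) :
    Tendsto (fun n : ℕ => δ₁ n * (n : ℝ) ^ μ * α ^ n) atTop
        (nhds (c / (1 - α) ^ 2)) ∧
      ∀ x : ℕ → ℕ, (∀ n, x n ≤ n) →
        0 < atTop.liminf (fun n => p n (x n)) →
        ∃ B : ℕ, ∀ n, n - x n ≤ B :=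
  stmt_9_general μ α c hμ hα0 hα1 hc r hrpos hasym δ₁ hδ₁ p hp
end

section
/- Let μ > 1, 0 < α < 1 and c > 0 be real numbers, and let r : ℕ → ℝ be nonnegative with r(0) = 0 and r(n)·n^μ·α^n → c as n → ∞. Define δ₁(n) := ∑_{x=0}^n (n − x + 1)·r(x) and p_n(x) := (n − x + 1)·r(x)/δ₁(n). Then for each fixed natural number a, lim_{n→∞} p_n(n − a) = (a + 1)·(1−α)²·α^a. In particular, if a = α/(1−α) is a natural number, this limit equals (1−α)·α^{α/(1−α)}. -/
/-!
Divide numerator and denominator of `p n (n - a)` by `n ^ μ * α ^ n`. The numerator becomes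
`(a + 1) * r (n - a) * n ^ μ * α ^ n → (a + 1) * c * α ^ a`. Reflecting the sum, the
denominator is `∑_{j ≤ n} (j + 1) * r (n - j) * n ^ μ * α ^ n`, whose `j`-th term tends to
`(j + 1) * c * α ^ j`; since `n ≤ (j + 1) * (n - j)`, the terms are dominated by a multiple of
`(j + 1) ^ (μ + 1) * α ^ j`, so by Tannery's theorem the denominator tends to
`∑ (j + 1) * c * α ^ j = c / (1 - α) ^ 2`.
-/

open Filter Topology Finset

lemma tendsto_natCast_div_sub_rpow (μ : ℝ) (j : ℕ) :
    Tendsto (fun n : ℕ => ((n : ℝ) / (n - j)) ^ μ) atTop (𝓝 1) := by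
  have h := (Real.continuousAt_rpow_const 1 μ (Or.inl one_ne_zero)).tendsto.comp
    (tendsto_natCast_div_add_atTop (-(j : ℝ)))
  simpa only [Real.one_rpow, Function.comp_def, ← sub_eq_add_neg] using h

lemma summable_add_one_rpow_mul_geometric {α : ℝ} (hα0 : 0 < α) (hα1 : α < 1) (s : ℝ) :
    Summable (fun j : ℕ => ((j : ℝ) + 1) ^ s * α ^ j) := by
  have hα : ‖α‖ < 1 := by rwa [Real.norm_of_nonneg hα0.le]
  have hshift : Summable (fun j : ℕ => ((j + 1 : ℕ) : ℝ) ^ ⌈s⌉₊ * α ^ (j + 1)) :=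
    (summable_nat_add_iff (f := fun n : ℕ => (n : ℝ) ^ ⌈s⌉₊ * α ^ n) 1).mpr
      (summable_pow_mul_geometric_of_norm_lt_one ⌈s⌉₊ hα)
  have hnat : Summable (fun j : ℕ => ((j : ℝ) + 1) ^ ⌈s⌉₊ * α ^ j) := by
    refine (hshift.mul_left α⁻¹).congr fun j => ?_
    rw [pow_succ]
    push_cast
    field_simp
  refine hnat.of_nonneg_of_le (fun j => by positivity) fun j => ?_
  gcongr
  rw [← Real.rpow_natCast]
  exact Real.rpow_le_rpow_of_exponent_le (by linarith [j.cast_nonneg (α := ℝ)]) (Nat.le_ceil s)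

section
variable {μ α c : ℝ} {r : ℕ → ℝ}

lemma tendsto_sub_mul_rpow_mul_pow
    (hr : Tendsto (fun n : ℕ => r n * (n : ℝ) ^ μ * α ^ n) atTop (𝓝 c)) (j : ℕ) :
    Tendsto (fun n : ℕ => r (n - j) * (n : ℝ) ^ μ * α ^ n) atTop (𝓝 (c * α ^ j)) := by
  have h := ((hr.comp (tendsto_sub_atTop_nat j)).mul (tendsto_natCast_div_sub_rpow μ j)).mul_const
    (α ^ j)
  rw [mul_one] at h
  refine h.congr' ?_
  filter_upwards [eventually_gt_atTop j] with n hjn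
  have hpos : (0 : ℝ) < n - j := sub_pos.mpr (by exact_mod_cast hjn)
  have hpow : α ^ (n - j) * α ^ j = α ^ n := by rw [← pow_add, Nat.sub_add_cancel hjn.le]
  rw [Function.comp_apply, Nat.cast_sub hjn.le, Real.div_rpow n.cast_nonneg hpos.le, ← hpow]
  field_simp [(Real.rpow_pos_of_pos hpos μ).ne']

lemma abs_sub_mul_rpow_mul_pow_le {K : ℝ} (hμ : 0 ≤ μ) (hα : 0 < α)
    (hK : ∀ q : ℕ, |r q| * (q : ℝ) ^ μ * α ^ q ≤ K) {n j : ℕ} (hjn : j ≤ n) :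
    |r (n - j)| * (n : ℝ) ^ μ * α ^ n ≤ max K |r 0| * ((j : ℝ) + 1) ^ μ * α ^ j := by
  obtain ⟨q, rfl⟩ := Nat.exists_eq_add_of_le' hjn
  rw [Nat.add_sub_cancel]
  rcases Nat.eq_zero_or_pos q with rfl | hq
  -- `hK` gives no information on `r 0` once `μ > 0`, since then `0 ^ μ = 0`.
  · simp only [zero_add]
    gcongr
    · exact le_max_right _ _
    · linarith
  · have hqj : ((q + j : ℕ) : ℝ) ≤ ((j : ℝ) + 1) * q := by
      push_cast
      nlinarith [(show (1 : ℝ) ≤ q by exact_mod_cast hq), j.cast_nonneg (α := ℝ)]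
    calc |r q| * ((q + j : ℕ) : ℝ) ^ μ * α ^ (q + j)
        ≤ |r q| * (((j : ℝ) + 1) ^ μ * (q : ℝ) ^ μ) * α ^ (q + j) := by
          rw [← Real.mul_rpow (by positivity) q.cast_nonneg]
          gcongr
      _ = (|r q| * (q : ℝ) ^ μ * α ^ q) * (((j : ℝ) + 1) ^ μ * α ^ j) := by ring
      _ ≤ max K |r 0| * ((j : ℝ) + 1) ^ μ * α ^ j := by
          rw [mul_assoc (max K |r 0|)]
          gcongr
          exact (hK q).trans (le_max_left _ _)

lemma hasSum_add_one_mul_geometric (hα0 : 0 ≤ α) (hα1 : α < 1) :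
    HasSum (fun j : ℕ => ((j : ℝ) + 1) * α ^ j) ((1 - α) ^ 2)⁻¹ := by
  have hα : ‖α‖ < 1 := by rwa [Real.norm_of_nonneg hα0]
  have h := (hasSum_coe_mul_geometric_of_norm_lt_one hα).add (hasSum_geometric_of_lt_one hα0 hα1)
  have hval : α / (1 - α) ^ 2 + (1 - α)⁻¹ = ((1 - α) ^ 2)⁻¹ := by
    field_simp [(sub_pos.mpr hα1).ne']
    ring
  simpa only [add_one_mul, hval] using h

lemma sum_range_sub_add_one_mul (n : ℕ) :
    ∑ x ∈ range (n + 1), ((n : ℝ) - x + 1) * r x =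
      ∑ j ∈ range (n + 1), ((j : ℝ) + 1) * r (n - j) := by
  rw [← sum_range_reflect]
  refine sum_congr rfl fun j hj => ?_
  rw [Nat.add_sub_cancel, Nat.cast_sub (Nat.le_of_lt_succ (mem_range.mp hj))]
  ring

theorem tendsto_sum_range_sub_add_one_mul_rpow_mul_pow (hμ : 0 ≤ μ) (hα0 : 0 < α)
    (hα1 : α < 1) (hr : Tendsto (fun n : ℕ => r n * (n : ℝ) ^ μ * α ^ n) atTop (𝓝 c)) :
    Tendsto
      (fun n : ℕ => (∑ x ∈ range (n + 1), ((n : ℝ) - x + 1) * r x) * (n : ℝ) ^ μ * α ^ n)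
      atTop (𝓝 (c / (1 - α) ^ 2)) := by
  obtain ⟨K, hK⟩ : ∃ K, ∀ q : ℕ, |r q| * (q : ℝ) ^ μ * α ^ q ≤ K := by
    obtain ⟨K, hK⟩ := hr.abs.bddAbove_range
    refine ⟨K, fun q => le_trans (le_of_eq ?_) (hK ⟨q, rfl⟩)⟩
    dsimp only
    rw [abs_mul, abs_mul, abs_of_nonneg (by positivity : (0 : ℝ) ≤ (q : ℝ) ^ μ),
      abs_of_pos (pow_pos hα0 q)]
  set M := max K |r 0|
  set F : ℕ → ℕ → ℝ := fun n j =>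
    if j ≤ n then ((j : ℝ) + 1) * (r (n - j) * (n : ℝ) ^ μ * α ^ n) else 0
  have hlim (j : ℕ) : Tendsto (F · j) atTop (𝓝 (((j : ℝ) + 1) * (c * α ^ j))) := by
    refine ((tendsto_sub_mul_rpow_mul_pow hr j).const_mul _).congr' ?_
    filter_upwards [eventually_ge_atTop j] with n hjn
    simp only [F, if_pos hjn]
  have hdom (n j : ℕ) : ‖F n j‖ ≤ M * (((j : ℝ) + 1) ^ (μ + 1) * α ^ j) := by
    by_cases hjn : j ≤ n
    · calc ‖F n j‖ = ((j : ℝ) + 1) * (|r (n - j)| * (n : ℝ) ^ μ * α ^ n) := by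
            simp only [F, if_pos hjn, Real.norm_eq_abs, abs_mul, abs_of_nonneg, abs_pow, hα0.le,
              j.cast_add_one_pos.le, Real.rpow_nonneg n.cast_nonneg]
        _ ≤ ((j : ℝ) + 1) * (M * ((j : ℝ) + 1) ^ μ * α ^ j) := by
            gcongr _ * ?_
            exact abs_sub_mul_rpow_mul_pow_le hμ hα0 hK hjn
        _ = M * (((j : ℝ) + 1) ^ (μ + 1) * α ^ j) := by
            rw [Real.rpow_add_one j.cast_add_one_pos.ne']
            ring
    · simp only [F, if_neg hjn, norm_zero]
      exact mul_nonneg ((abs_nonneg _).trans (le_max_right _ _)) (by positivity)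
  have h := tendsto_tsum_of_dominated_convergence
    ((summable_add_one_rpow_mul_geometric hα0 hα1 (μ + 1)).mul_left M) hlim
    (Eventually.of_forall hdom)
  have hsum : HasSum (fun j : ℕ => ((j : ℝ) + 1) * (c * α ^ j)) (c / (1 - α) ^ 2) := by
    simpa only [div_eq_mul_inv, mul_left_comm c] using
      (hasSum_add_one_mul_geometric hα0.le hα1).mul_left c
  rw [hsum.tsum_eq] at h
  refine h.congr fun n => ?_
  rw [tsum_eq_sum (s := range (n + 1)) fun j hj => if_neg (by simpa using hj),
    sum_range_sub_add_one_mul, sum_mul, sum_mul]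
  refine sum_congr rfl fun j hj => ?_
  simp only [if_pos (Nat.le_of_lt_succ (mem_range.mp hj))]
  ring

end

lemma one_sub_mul_rpow_div_one_sub_eq {α : ℝ} {a : ℕ} (hα1 : α < 1)
    (ha : α / (1 - α) = a) :
    (1 - α) * α ^ (α / (1 - α)) = ((a : ℝ) + 1) * (1 - α) ^ 2 * α ^ a := by
  have hinv : ((a : ℝ) + 1) * (1 - α) = 1 := by
    rw [← ha]
    field_simp [(sub_pos.mpr hα1).ne']
    ring
  rw [ha, Real.rpow_natCast]
  linear_combination (-(1 - α) * α ^ a) * hinv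

theorem stmt_10_general (μ α c : ℝ) (hμ : 1 < μ) (hα0 : 0 < α) (hα1 : α < 1) (hc : 0 < c)
    (r : ℕ → ℝ)
    (hasym : Tendsto (fun n : ℕ => r n * (n : ℝ) ^ μ * α ^ n) atTop (nhds c))
    (δ₁ : ℕ → ℝ)
    (hδ₁ : ∀ n, δ₁ n = ∑ x ∈ Finset.range (n + 1), ((n : ℝ) - x + 1) * r x)
    (p : ℕ → ℕ → ℝ)
    (hp : ∀ n x, p n x = ((n : ℝ) - x + 1) * r x / δ₁ n) :
    (∀ a : ℕ, Tendsto (fun n => p n (n - a)) atTop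
        (nhds (((a : ℝ) + 1) * (1 - α) ^ 2 * α ^ a))) ∧
      ∀ a : ℕ, α / (1 - α) = (a : ℝ) →
        Tendsto (fun n => p n (n - a)) atTop
          (nhds ((1 - α) * α ^ (α / (1 - α)))) := by
  have hden : Tendsto (fun n : ℕ => δ₁ n * (n : ℝ) ^ μ * α ^ n) atTop
      (𝓝 (c / (1 - α) ^ 2)) := by
    simpa only [hδ₁] using
      tendsto_sum_range_sub_add_one_mul_rpow_mul_pow (by linarith) hα0 hα1 hasym
  have hlim (a : ℕ) : Tendsto (fun n => p n (n - a)) atTop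
      (𝓝 (((a : ℝ) + 1) * (1 - α) ^ 2 * α ^ a)) := by
    have h := ((tendsto_sub_mul_rpow_mul_pow hasym a).const_mul ((a : ℝ) + 1)).div hden
      (by positivity)
    rw [show ((a : ℝ) + 1) * (c * α ^ a) / (c / (1 - α) ^ 2)
      = ((a : ℝ) + 1) * (1 - α) ^ 2 * α ^ a by field_simp] at h
    refine h.congr' ?_
    filter_upwards [eventually_ge_atTop a, eventually_gt_atTop 0] with n han hn
    have hscale : 0 < (n : ℝ) ^ μ * α ^ n :=
      mul_pos (Real.rpow_pos_of_pos (by exact_mod_cast hn) μ) (pow_pos hα0 n)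
    rw [Pi.div_apply, hp, Nat.cast_sub han, sub_sub_cancel,
      ← mul_div_mul_right (((a : ℝ) + 1) * r (n - a)) (δ₁ n) hscale.ne']
    ring
  exact ⟨hlim, fun a ha => one_sub_mul_rpow_div_one_sub_eq hα1 ha ▸ hlim a⟩

theorem stmt_10 (μ α c : ℝ) (hμ : 1 < μ) (hα0 : 0 < α) (hα1 : α < 1) (hc : 0 < c)
    (r : ℕ → ℝ) (hr0 : r 0 = 0) (hrpos : ∀ n, 0 ≤ r n)
    (hasym : Tendsto (fun n : ℕ => r n * (n : ℝ) ^ μ * α ^ n) atTop (nhds c))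
    (δ₁ : ℕ → ℝ)
    (hδ₁ : ∀ n, δ₁ n = ∑ x ∈ Finset.range (n + 1), ((n : ℝ) - x + 1) * r x)
    (p : ℕ → ℕ → ℝ)
    (hp : ∀ n x, p n x = ((n : ℝ) - x + 1) * r x / δ₁ n) :
    (∀ a : ℕ, Tendsto (fun n => p n (n - a)) atTop
        (nhds (((a : ℝ) + 1) * (1 - α) ^ 2 * α ^ a))) ∧
      ∀ a : ℕ, α / (1 - α) = (a : ℝ) →
        Tendsto (fun n => p n (n - a)) atTop
          (nhds ((1 - α) * α ^ (α / (1 - α)))) :=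
  stmt_10_general μ α c hμ hα0 hα1 hc r hasym δ₁ hδ₁ p hp
end

section
/- Let μ > 1, 0 < α < 1 and c > 0 be real numbers, and let r : ℕ → ℝ be nonnegative with r(0) = 0 and r(n)·n^μ·α^n → c as n → ∞. Then ρ := ∑_{n≥1} r(n)·α^n converges, and the sequence δ₂(n) := ∑_{s+t+u=n} r(s)·r(t)·C(u+2, 2) (sum over nonnegative integers s, t, u) satisfies δ₂(n)·n^μ·α^n → 2·c·ρ/(1−α)³ as n → ∞. -/
/-!
Put `a n = r n * α ^ n` and `b n = (n + 2).choose 2 * α ^ n`, so that `δ₂ n * α ^ n` is the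
triple Cauchy product `a * a * b`. If `a n * n ^ μ → c` and `b n * n ^ μ → d` with `μ > 1`, then
`(a * b) n * n ^ μ → c * ∑ b + d * ∑ a`: split the convolution at `n / 2`; in each half the factor
whose index is at least `n / 2` is uniformly `O(n ^ (-μ))`, so dominated convergence applies to the
other, summable, factor. Since `b` decays geometrically, `d = 0` for `b`; applying the fact twice
gives the limit `2 * c * ρ * ∑ b`, and `∑ b = (1 - α)⁻³`.
-/

open Filter Topology Finset Asymptotics

theorem summable_of_tendsto_mul_rpow {μ c : ℝ} {a : ℕ → ℝ} (hμ : 1 < μ)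
    (h : Tendsto (fun n : ℕ => a n * (n : ℝ) ^ μ) atTop (𝓝 c)) : Summable a := by
  refine summable_of_isBigO_nat' (Real.summable_nat_rpow.2 (neg_lt_neg hμ)) ?_
  have hO := h.isBigO_one ℝ |>.mul (isBigO_refl (fun n : ℕ => (n : ℝ) ^ (-μ)) atTop)
  refine (hO.congr' ?_ (Eventually.of_forall fun n => one_mul _)).trans (isBigO_refl _ _)
  filter_upwards [eventually_gt_atTop 0] with n hn
  rw [mul_assoc, ← Real.rpow_add (by positivity), add_neg_cancel, Real.rpow_zero, mul_one]

theorem tendsto_comp_sub_mul_rpow {μ d : ℝ} {b : ℕ → ℝ}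
    (hb : Tendsto (fun n : ℕ => b n * (n : ℝ) ^ μ) atTop (𝓝 d)) (k : ℕ) :
    Tendsto (fun n : ℕ => b (n - k) * (n : ℝ) ^ μ) atTop (𝓝 d) := by
  have hratio : Tendsto (fun m : ℕ => (((m : ℝ) + k) / m) ^ μ) atTop (𝓝 1) := by
    have h := (tendsto_const_div_atTop_nhds_zero_nat (k : ℝ)).const_add 1
    rw [add_zero] at h
    have h' := h.rpow_const (p := μ) (Or.inl one_ne_zero)
    rw [Real.one_rpow] at h'
    refine h'.congr' ?_
    filter_upwards [eventually_gt_atTop 0] with m hm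
    rw [add_div, div_self (by positivity)]
  have hshift : Tendsto (fun m : ℕ => b m * ((m : ℝ) + k) ^ μ) atTop (𝓝 d) := by
    refine (mul_one d ▸ hb.mul hratio).congr' ?_
    filter_upwards [eventually_gt_atTop 0] with m hm
    rw [Real.div_rpow (by positivity) (by positivity), mul_assoc,
      mul_div_cancel₀ _ (by positivity)]
  refine (hshift.comp (tendsto_sub_atTop_nat k)).congr' ?_
  filter_upwards [eventually_ge_atTop k] with n hn
  simp [Function.comp_apply, Nat.cast_sub hn]

theorem abs_comp_sub_mul_rpow_le {μ C : ℝ} {x : ℕ → ℝ} (hμ : 0 ≤ μ)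
    (hC : ∀ m : ℕ, |x m| * (m : ℝ) ^ μ ≤ C) {n k : ℕ} (hkn : 2 * k ≤ n) :
    |x (n - k)| * (n : ℝ) ^ μ ≤ 2 ^ μ * C := by
  have hn : (n : ℝ) ≤ 2 * ((n - k : ℕ) : ℝ) := by
    rw [Nat.cast_sub (by omega)]
    have : 2 * (k : ℝ) ≤ n := by exact_mod_cast hkn
    linarith
  calc |x (n - k)| * (n : ℝ) ^ μ
      ≤ |x (n - k)| * (2 * ((n - k : ℕ) : ℝ)) ^ μ := by gcongr
    _ = 2 ^ μ * (|x (n - k)| * ((n - k : ℕ) : ℝ) ^ μ) := by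
        rw [Real.mul_rpow zero_le_two (Nat.cast_nonneg _)]; ring
    _ ≤ 2 ^ μ * C := by gcongr; exact hC _

theorem exists_abs_mul_rpow_le {μ d : ℝ} {b : ℕ → ℝ}
    (hb : Tendsto (fun n : ℕ => b n * (n : ℝ) ^ μ) atTop (𝓝 d)) :
    ∃ C, ∀ m : ℕ, |b m| * (m : ℝ) ^ μ ≤ C := by
  obtain ⟨C, hC⟩ := hb.norm.bddAbove_range
  refine ⟨C, fun m => ?_⟩
  have : ‖b m * (m : ℝ) ^ μ‖ ≤ C := hC ⟨m, rfl⟩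
  rwa [Real.norm_eq_abs, abs_mul, abs_of_nonneg (Real.rpow_nonneg (Nat.cast_nonneg m) μ)] at this

theorem tendsto_sum_mul_comp_sub_mul_rpow {μ d : ℝ} {a b : ℕ → ℝ} (hμ : 0 ≤ μ)
    (ha : Summable a) (hb : Tendsto (fun n : ℕ => b n * (n : ℝ) ^ μ) atTop (𝓝 d))
    (s : ℕ → Finset ℕ) (hs : ∀ n, ∀ k ∈ s n, 2 * k ≤ n) (hs_ev : ∀ k, ∀ᶠ n in atTop, k ∈ s n) :
    Tendsto (fun n : ℕ => (∑ k ∈ s n, a k * b (n - k)) * (n : ℝ) ^ μ) atTop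
      (𝓝 ((∑' k, a k) * d)) := by
  obtain ⟨C, hC⟩ := exists_abs_mul_rpow_le hb
  let F : ℕ → ℕ → ℝ := fun n => (s n : Set ℕ).indicator fun k => a k * (b (n - k) * (n : ℝ) ^ μ)
  have hF : ∀ n, (∑ k ∈ s n, a k * b (n - k)) * (n : ℝ) ^ μ = ∑' k, F n k := fun n => by
    rw [sum_mul, ← sum_eq_tsum_indicator]
    exact sum_congr rfl fun k _ => mul_assoc _ _ _
  simp_rw [hF, ← tsum_mul_right]
  refine tendsto_tsum_of_dominated_convergence (bound := fun k => |a k| * (2 ^ μ * C))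
    (ha.abs.mul_right _) (fun k => ?_) (Eventually.of_forall fun n k => ?_)
  · refine (tendsto_const_nhds.mul (tendsto_comp_sub_mul_rpow hb k)).congr' ?_
    filter_upwards [hs_ev k] with n hn
    simp [F, Set.indicator_of_mem (Finset.mem_coe.2 hn)]
  · by_cases hk : k ∈ s n
    · simp only [F, Set.indicator_of_mem (Finset.mem_coe.2 hk), Real.norm_eq_abs, abs_mul,
        abs_of_nonneg (Real.rpow_nonneg (Nat.cast_nonneg n) μ)]
      exact mul_le_mul_of_nonneg_left (abs_comp_sub_mul_rpow_le hμ hC (hs n k hk)) (abs_nonneg _)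
    · simp only [F, Set.indicator_of_notMem (mt Finset.mem_coe.1 hk), norm_zero]
      have := (abs_nonneg (b 1)).trans (by simpa using hC 1)
      positivity

theorem sum_range_mul_sub_eq_add {R : Type*} [CommSemiring R] (f g : ℕ → R) (n : ℕ) :
    ∑ k ∈ range (n + 1), f k * g (n - k) =
      ∑ k ∈ range (n + 1) with 2 * k ≤ n, f k * g (n - k) +
        ∑ k ∈ range (n + 1) with 2 * k < n, g k * f (n - k) := by
  rw [← sum_filter_add_sum_filter_not _ (fun k => 2 * k ≤ n)]
  congr 1
  refine sum_nbij' (fun k => n - k) (fun k => n - k) ?_ ?_ ?_ ?_ ?_ <;>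
    simp only [mem_filter, mem_range] <;> intro k hk
  · omega
  · omega
  · omega
  · omega
  · rw [mul_comm, Nat.sub_sub_self (by omega)]

theorem tendsto_sum_range_mul_sub_mul_rpow {μ c d : ℝ} {a b : ℕ → ℝ} (hμ : 1 < μ)
    (ha : Tendsto (fun n : ℕ => a n * (n : ℝ) ^ μ) atTop (𝓝 c))
    (hb : Tendsto (fun n : ℕ => b n * (n : ℝ) ^ μ) atTop (𝓝 d)) :
    Tendsto (fun n : ℕ => (∑ k ∈ range (n + 1), a k * b (n - k)) * (n : ℝ) ^ μ) atTop
      (𝓝 ((∑' k, a k) * d + (∑' k, b k) * c)) := by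
  have hμ0 : 0 ≤ μ := by linarith
  have hmem : ∀ k, ∀ᶠ n in atTop, k ∈ range (n + 1) ∧ 2 * k < n := fun k => by
    filter_upwards [eventually_gt_atTop (2 * k)] with n hn using ⟨mem_range.2 (by omega), hn⟩
  have hle := tendsto_sum_mul_comp_sub_mul_rpow hμ0 (summable_of_tendsto_mul_rpow hμ ha) hb
    (fun n => {k ∈ range (n + 1) | 2 * k ≤ n}) (fun n k hk => (mem_filter.1 hk).2)
    fun k => (hmem k).mono fun n hn => mem_filter.2 ⟨hn.1, hn.2.le⟩
  have hlt := tendsto_sum_mul_comp_sub_mul_rpow hμ0 (summable_of_tendsto_mul_rpow hμ hb) ha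
    (fun n => {k ∈ range (n + 1) | 2 * k < n}) (fun n k hk => (mem_filter.1 hk).2.le)
    fun k => (hmem k).mono fun n hn => mem_filter.2 hn
  simpa only [sum_range_mul_sub_eq_add, add_mul] using hle.add hlt

theorem tendsto_choose_mul_pow_mul_rpow (k : ℕ) {α : ℝ} (hα : |α| < 1) (μ : ℝ) :
    Tendsto (fun n : ℕ => ((n + k).choose k : ℝ) * α ^ n * (n : ℝ) ^ μ) atTop (𝓝 0) := by
  have hK : μ ≤ (⌈μ⌉₊ : ℝ) := Nat.le_ceil μ
  have hdecay := (tendsto_pow_const_mul_const_pow_of_abs_lt_one (k + ⌈μ⌉₊)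
    (by rwa [abs_abs])).const_mul ((k + 1 : ℝ) ^ k)
  rw [mul_zero] at hdecay
  refine squeeze_zero_norm' ?_ hdecay
  filter_upwards [eventually_ge_atTop 1] with n hn
  have hn1 : (1 : ℝ) ≤ n := by exact_mod_cast hn
  have hchoose : ((n + k).choose k : ℝ) ≤ (k + 1 : ℝ) ^ k * (n : ℝ) ^ k := by
    rw [← mul_pow]
    calc ((n + k).choose k : ℝ) ≤ ((n + k : ℕ) : ℝ) ^ k := by exact_mod_cast Nat.choose_le_pow _ _
      _ ≤ ((k + 1) * n) ^ k := by push_cast; gcongr; nlinarith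
  have hrpow : (n : ℝ) ^ μ ≤ (n : ℝ) ^ ⌈μ⌉₊ := by
    rw [← Real.rpow_natCast]; exact Real.rpow_le_rpow_of_exponent_le hn1 hK
  rw [Real.norm_eq_abs, abs_mul, abs_mul, abs_pow, abs_of_nonneg (Nat.cast_nonneg _),
    abs_of_nonneg (by positivity : (0 : ℝ) ≤ (n : ℝ) ^ μ)]
  calc ((n + k).choose k : ℝ) * |α| ^ n * (n : ℝ) ^ μ
      ≤ (k + 1 : ℝ) ^ k * (n : ℝ) ^ k * |α| ^ n * (n : ℝ) ^ ⌈μ⌉₊ := by gcongr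
    _ = (k + 1 : ℝ) ^ k * ((n : ℝ) ^ (k + ⌈μ⌉₊) * |α| ^ n) := by ring

theorem sum_sum_mul_mul_pow {R : Type*} [CommSemiring R] (r w : ℕ → R) (x : R) (n : ℕ) :
    (∑ s ∈ range (n + 1), ∑ t ∈ range (n - s + 1), r s * r t * w (n - s - t)) * x ^ n =
      ∑ s ∈ range (n + 1), r s * x ^ s *
        ∑ t ∈ range (n - s + 1), r t * x ^ t * (w (n - s - t) * x ^ (n - s - t)) := by
  rw [sum_mul]
  refine sum_congr rfl fun s hs => ?_
  rw [sum_mul, mul_sum]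
  refine sum_congr rfl fun t ht => ?_
  have hn : s + t + (n - s - t) = n := by simp only [mem_range] at hs ht; omega
  rw [show x ^ n = x ^ s * x ^ t * x ^ (n - s - t) by rw [← pow_add, ← pow_add, hn]]
  ring

theorem stmt_13_general (μ α c : ℝ) (hμ : 1 < μ) (hα0 : 0 < α) (hα1 : α < 1)
    (r : ℕ → ℝ)
    (hasym : Tendsto (fun n : ℕ => r n * (n : ℝ) ^ μ * α ^ n) atTop (nhds c))
    (δ₂ : ℕ → ℝ)
    (hδ₂ : ∀ n, δ₂ n = ∑ s ∈ Finset.range (n + 1), ∑ t ∈ Finset.range (n - s + 1),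
      r s * r t * (Nat.choose (n - s - t + 2) 2 : ℝ)) :
    Summable (fun n : ℕ => r n * α ^ n) ∧
      Tendsto (fun n : ℕ => δ₂ n * (n : ℝ) ^ μ * α ^ n) atTop
        (nhds (2 * c * (∑' n : ℕ, r n * α ^ n) / (1 - α) ^ 3)) := by
  set a : ℕ → ℝ := fun n => r n * α ^ n
  set b : ℕ → ℝ := fun n => ((n + 2).choose 2 : ℝ) * α ^ n
  have hα : |α| < 1 := abs_lt.2 ⟨by linarith, hα1⟩
  have ha : Tendsto (fun n : ℕ => a n * (n : ℝ) ^ μ) atTop (𝓝 c) :=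
    hasym.congr fun n => by ring
  have hb : Tendsto (fun n : ℕ => b n * (n : ℝ) ^ μ) atTop (𝓝 0) :=
    tendsto_choose_mul_pow_mul_rpow 2 hα μ
  have hsa := summable_of_tendsto_mul_rpow hμ ha
  have hsb := summable_of_tendsto_mul_rpow hμ hb
  have hab := tendsto_sum_range_mul_sub_mul_rpow hμ ha hb
  have habb := tendsto_sum_range_mul_sub_mul_rpow hμ ha hab
  have hcauchy := tsum_mul_tsum_eq_tsum_sum_range_of_summable_norm hsa.norm hsb.norm
  have htsum_b : ∑' n, b n = 1 / (1 - α) ^ 3 :=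
    tsum_choose_mul_geometric_of_norm_lt_one 2 (by rwa [Real.norm_eq_abs])
  refine ⟨hsa, ?_⟩
  rw [← hcauchy, htsum_b] at habb
  convert habb using 2 with n
  · rw [hδ₂, mul_right_comm, sum_sum_mul_mul_pow r (fun u => ((u + 2).choose 2 : ℝ))]
  · ring

theorem stmt_13 (μ α c : ℝ) (hμ : 1 < μ) (hα0 : 0 < α) (hα1 : α < 1) (hc : 0 < c)
    (r : ℕ → ℝ) (hr0 : r 0 = 0) (hrpos : ∀ n, 0 ≤ r n)
    (hasym : Tendsto (fun n : ℕ => r n * (n : ℝ) ^ μ * α ^ n) atTop (nhds c))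
    (δ₂ : ℕ → ℝ)
    (hδ₂ : ∀ n, δ₂ n = ∑ s ∈ Finset.range (n + 1), ∑ t ∈ Finset.range (n - s + 1),
      r s * r t * (Nat.choose (n - s - t + 2) 2 : ℝ)) :
    Summable (fun n : ℕ => r n * α ^ n) ∧
      Tendsto (fun n : ℕ => δ₂ n * (n : ℝ) ^ μ * α ^ n) atTop
        (nhds (2 * c * (∑' n : ℕ, r n * α ^ n) / (1 - α) ^ 3)) :=
  stmt_13_general μ α c hμ hα0 hα1 r hasym δ₂ hδ₂
end

section
/- Let μ > 1, 0 < α < 1 and c > 0 be real numbers, and let r : ℕ → ℝ satisfy r(0) = 0, r(n) > 0 and r(n+1) > r(n) for all n ≥ 1, and r(n)·n^μ·α^n → c as n → ∞. Let x : ℕ → ℕ satisfy x_n → ∞ and 2·x_n ≤ n for all n. Then there exist real constants 0 < κ₁ ≤ κ₂ and N ∈ ℕ such that for all n ≥ N: κ₁·C(n − 2x_n + 2, 2)·r(x_n) ≤ ∑_{i=1}^{x_n} C(n − x_n − i + 2, 2)·r(i) ≤ κ₂·C(n − 2x_n + 2, 2)·r(x_n). -/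
/-!
Since `r n · n^μ · αⁿ → c > 0`, the ratio `r n / r (n + 1)` tends to `α`, so beyond some `M` the
sequence grows at least geometrically with rate `1/β`, `α < β < 1`; monotonicity of `r` extends
this to `r i ≤ K βʸ⁻ⁱ r y` for all `1 ≤ i ≤ y`. With `m = n - 2xₙ + 2` the summand is
`C(m + (xₙ - i), 2) r i ≤ (1 + (xₙ - i))² C(m, 2) · K β^(xₙ - i) r xₙ`, and the weights
`(1 + j)² βʲ` have a finite sum. The lower bound is the term `i = xₙ`.
-/

open Filter Topology Finset

theorem tendsto_div_succ_of_tendsto_mul_rpow_mul_pow {r : ℕ → ℝ} {μ α c : ℝ} (hα : α ≠ 0)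
    (hc : c ≠ 0) (h : Tendsto (fun n : ℕ ↦ r n * (n : ℝ) ^ μ * α ^ n) atTop (𝓝 c)) :
    Tendsto (fun n ↦ r n / r (n + 1)) atTop (𝓝 α) := by
  set f := fun n : ℕ ↦ r n * (n : ℝ) ^ μ * α ^ n
  have hf : Tendsto (fun n ↦ f n / f (n + 1)) atTop (𝓝 1) := by
    rw [← div_self hc]
    exact h.div (h.comp (tendsto_add_atTop_nat 1)) hc
  have hpow : Tendsto (fun n : ℕ ↦ ((n : ℝ) / (n + 1)) ^ μ) atTop (𝓝 1) := by
    simpa [Function.comp_def] using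
      (Real.continuousAt_rpow_const 1 μ (.inl one_ne_zero)).tendsto.comp
        (tendsto_natCast_div_add_atTop (1 : ℝ))
  have hlim := (hf.div hpow one_ne_zero).mul_const α
  rw [div_one, one_mul] at hlim
  refine hlim.congr' ((eventually_ge_atTop 1).mono fun n hn ↦ ?_)
  have hn : (0 : ℝ) < n := by exact_mod_cast hn
  simp only [Pi.div_apply]
  rw [Real.div_rpow hn.le (by positivity)]
  simp only [f, Nat.cast_add, Nat.cast_one, pow_succ]
  have : (0 : ℝ) < (n : ℝ) ^ μ := by positivity
  have : (0 : ℝ) < ((n : ℝ) + 1) ^ μ := by positivity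
  rcases eq_or_ne (r (n + 1)) 0 with h0 | h0
  · simp [h0]
  · field_simp

section

variable {r : ℕ → ℝ} {β : ℝ}

theorem le_pow_sub_mul_of_le_mul_succ {M : ℕ} (hβ : 0 ≤ β) (h : ∀ m ≥ M, r m ≤ β * r (m + 1))
    {i y : ℕ} (hMi : M ≤ i) (hiy : i ≤ y) : r i ≤ β ^ (y - i) * r y := by
  induction y, hiy using Nat.le_induction with
  | base => simp
  | succ y hiy ih =>
    calc r i ≤ β ^ (y - i) * r y := ih
      _ ≤ β ^ (y - i) * (β * r (y + 1)) := by gcongr; exact h y (hMi.trans hiy)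
      _ = β ^ (y + 1 - i) * r (y + 1) := by rw [Nat.sub_add_comm hiy, pow_succ, mul_assoc]

theorem exists_le_mul_pow_sub_mul (hβ0 : 0 < β) (hβ1 : β ≤ 1) (hr : ∀ i, 0 ≤ r i)
    (hmono : MonotoneOn r (Set.Ici 1)) (h : ∀ᶠ m in atTop, r m ≤ β * r (m + 1)) :
    ∃ K, 1 ≤ K ∧ ∀ i y, 1 ≤ i → i ≤ y → r i ≤ K * β ^ (y - i) * r y := by
  obtain ⟨M, hM⟩ := eventually_atTop.mp h
  have hβM : 0 < β ^ M := pow_pos hβ0 M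
  refine ⟨(β ^ M)⁻¹, one_le_inv₀ hβM |>.2 (pow_le_one₀ hβ0.le hβ1), fun i y hi hiy ↦ ?_⟩
  rw [mul_assoc, le_inv_mul_iff₀ hβM]
  rcases le_or_gt M i with hMi | hiM
  · calc β ^ M * r i ≤ r i := mul_le_of_le_one_left (hr i) (pow_le_one₀ hβ0.le hβ1)
      _ ≤ β ^ (y - i) * r y := le_pow_sub_mul_of_le_mul_succ hβ0.le hM hMi hiy
  -- for `i < M`, pass through `min M y` by monotonicity
  set j := min M y
  have hrj : r j ≤ β ^ (y - j) * r y := by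
    rcases le_total M y with hMy | hyM
    · simpa [j, min_eq_left hMy] using le_pow_sub_mul_of_le_mul_succ hβ0.le hM le_rfl hMy
    · simp [j, min_eq_right hyM]
  calc β ^ M * r i ≤ β ^ M * r j := by
        gcongr; exact hmono hi (hi.trans (le_min hiM.le hiy)) (le_min hiM.le hiy)
    _ ≤ β ^ M * (β ^ (y - j) * r y) := by gcongr
    _ = β ^ (M + (y - j)) * r y := by ring
    _ ≤ β ^ (y - i) * r y :=
        mul_le_mul_of_nonneg_right (pow_le_pow_of_le_one hβ0.le hβ1 (by omega)) (hr y)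

theorem cast_choose_two_add_le {m : ℕ} (hm : 2 ≤ m) (j : ℕ) :
    ((m + j).choose 2 : ℝ) ≤ (1 + j) ^ 2 * m.choose 2 := by
  rw [Nat.cast_choose_two, Nat.cast_choose_two]
  push_cast
  have hm' : (2 : ℝ) ≤ m := by exact_mod_cast hm
  have hj : (0 : ℝ) ≤ j := j.cast_nonneg
  calc (m + j : ℝ) * (m + j - 1) / 2 ≤ ((1 + j) * m) * ((1 + j) * (m - 1)) / 2 := by
        gcongr <;> nlinarith
    _ = (1 + j) ^ 2 * (m * (m - 1) / 2) := by ring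

theorem summable_one_add_sq_mul_pow (hβ0 : 0 ≤ β) (hβ1 : β < 1) :
    Summable fun j : ℕ ↦ (1 + (j : ℝ)) ^ 2 * β ^ j := by
  have hβ : ‖β‖ < 1 := by rwa [Real.norm_of_nonneg hβ0]
  have h := (summable_pow_mul_geometric_of_norm_lt_one 2 hβ).add
    (((summable_pow_mul_geometric_of_norm_lt_one 1 hβ).mul_left 2).add
      (summable_pow_mul_geometric_of_norm_lt_one 0 hβ))
  exact h.congr fun j ↦ by ring

section Convolution

variable {m y : ℕ}

theorem choose_two_mul_le_sum_Icc (hr0 : r 0 = 0) (hr : ∀ i, 0 ≤ r i) :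
    (m.choose 2 : ℝ) * r y ≤ ∑ i ∈ Icc 1 y, ((m + (y - i)).choose 2 : ℝ) * r i := by
  rcases Nat.eq_zero_or_pos y with rfl | hy
  · simp [hr0]
  simpa using single_le_sum (f := fun i ↦ ((m + (y - i)).choose 2 : ℝ) * r i)
    (fun i _ ↦ by have := hr i; positivity) (mem_Icc.2 ⟨hy, le_rfl⟩)

theorem sum_Icc_le_mul_choose_two_mul (hm : 2 ≤ m) (hβ0 : 0 ≤ β) (hβ1 : β < 1)
    (hr : ∀ i, 0 ≤ r i) {K : ℝ} (hK0 : 0 ≤ K)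
    (hK : ∀ i, 1 ≤ i → i ≤ y → r i ≤ K * β ^ (y - i) * r y) :
    ∑ i ∈ Icc 1 y, ((m + (y - i)).choose 2 : ℝ) * r i ≤
      K * (∑' j : ℕ, (1 + (j : ℝ)) ^ 2 * β ^ j) * m.choose 2 * r y := by
  set g := fun j : ℕ ↦ (1 + (j : ℝ)) ^ 2 * β ^ j
  have hg : Summable g := summable_one_add_sq_mul_pow hβ0 hβ1
  have hsum : ∑ i ∈ Icc 1 y, g (y - i) ≤ ∑' j, g j := by
    rw [← sum_image (g := (y - ·)) fun a ha b hb hab ↦ by simp at ha hb hab; omega]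
    exact hg.sum_le_tsum _ fun j _ ↦ by positivity
  have hry := hr y
  calc ∑ i ∈ Icc 1 y, ((m + (y - i)).choose 2 : ℝ) * r i
      ≤ ∑ i ∈ Icc 1 y, (1 + ((y - i : ℕ) : ℝ)) ^ 2 * m.choose 2 * (K * β ^ (y - i) * r y) := by
        refine sum_le_sum fun i hi ↦ ?_
        obtain ⟨hi1, hiy⟩ := mem_Icc.1 hi
        have := hr i
        gcongr
        exacts [cast_choose_two_add_le hm _, hK i hi1 hiy]
    _ = K * (∑ i ∈ Icc 1 y, g (y - i)) * m.choose 2 * r y := by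
        simp only [g, mul_sum, sum_mul]
        exact sum_congr rfl fun i _ ↦ by ring
    _ ≤ K * (∑' j, g j) * m.choose 2 * r y := by gcongr

end Convolution

end

theorem stmt_14_general (μ α c : ℝ) (hα0 : 0 < α) (hα1 : α < 1) (hc : 0 < c)
    (r : ℕ → ℝ) (hr0 : r 0 = 0) (hrpos : ∀ n, 1 ≤ n → 0 < r n)
    (hrmono : ∀ n, 1 ≤ n → r n < r (n + 1))
    (hasym : Tendsto (fun n : ℕ => r n * (n : ℝ) ^ μ * α ^ n) atTop (nhds c))
    (x : ℕ → ℕ) (hx2 : ∀ n, 2 * x n ≤ n) :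
    ∃ κ₁ κ₂ : ℝ, 0 < κ₁ ∧ κ₁ ≤ κ₂ ∧ ∃ N : ℕ, ∀ n ≥ N,
      κ₁ * (Nat.choose (n - 2 * x n + 2) 2 : ℝ) * r (x n) ≤
          (∑ i ∈ Finset.Icc 1 (x n), (Nat.choose (n - x n - i + 2) 2 : ℝ) * r i) ∧
        (∑ i ∈ Finset.Icc 1 (x n), (Nat.choose (n - x n - i + 2) 2 : ℝ) * r i) ≤
          κ₂ * (Nat.choose (n - 2 * x n + 2) 2 : ℝ) * r (x n) := by
  obtain ⟨β, hαβ, hβ1⟩ := exists_between hα1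
  have hβ0 : 0 < β := hα0.trans hαβ
  have hr : ∀ i, 0 ≤ r i := fun i ↦
    i.eq_zero_or_pos.elim (fun h ↦ h ▸ hr0.ge) fun h ↦ (hrpos i h).le
  have hratio : ∀ᶠ m in atTop, r m ≤ β * r (m + 1) := by
    filter_upwards [(tendsto_div_succ_of_tendsto_mul_rpow_mul_pow hα0.ne' hc.ne' hasym).eventually
      (eventually_lt_nhds hαβ)] with m hm
    exact ((div_lt_iff₀ (hrpos _ m.succ_pos)).1 hm).le
  obtain ⟨K, hK1, hK⟩ := exists_le_mul_pow_sub_mul hβ0 hβ1.le hr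
    (monotoneOn_nat_Ici_of_le_succ fun n hn ↦ (hrmono n hn).le) hratio
  have hT : 1 ≤ ∑' j : ℕ, (1 + (j : ℝ)) ^ 2 * β ^ j := by
    simpa using (summable_one_add_sq_mul_pow hβ0.le hβ1).le_tsum 0
      fun j _ ↦ by positivity
  refine ⟨1, _, one_pos, one_le_mul_of_one_le_of_one_le hK1 hT, 0, fun n _ ↦ ?_⟩
  have hsum : ∑ i ∈ Icc 1 (x n), ((n - x n - i + 2).choose 2 : ℝ) * r i =
      ∑ i ∈ Icc 1 (x n), ((n - 2 * x n + 2 + (x n - i)).choose 2 : ℝ) * r i :=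
    sum_congr rfl fun i hi ↦ by
      rw [show n - x n - i + 2 = n - 2 * x n + 2 + (x n - i) by grind]
  rw [hsum, one_mul]
  exact ⟨choose_two_mul_le_sum_Icc hr0 hr, sum_Icc_le_mul_choose_two_mul (by omega) hβ0.le hβ1 hr
    (zero_le_one.trans hK1) (hK · (x n))⟩

theorem stmt_14 (μ α c : ℝ) (hμ : 1 < μ) (hα0 : 0 < α) (hα1 : α < 1) (hc : 0 < c)
    (r : ℕ → ℝ) (hr0 : r 0 = 0) (hrpos : ∀ n, 1 ≤ n → 0 < r n)
    (hrmono : ∀ n, 1 ≤ n → r n < r (n + 1))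
    (hasym : Tendsto (fun n : ℕ => r n * (n : ℝ) ^ μ * α ^ n) atTop (nhds c))
    (x : ℕ → ℕ) (hx : Tendsto x atTop atTop) (hx2 : ∀ n, 2 * x n ≤ n) :
    ∃ κ₁ κ₂ : ℝ, 0 < κ₁ ∧ κ₁ ≤ κ₂ ∧ ∃ N : ℕ, ∀ n ≥ N,
      κ₁ * (Nat.choose (n - 2 * x n + 2) 2 : ℝ) * r (x n) ≤
          (∑ i ∈ Finset.Icc 1 (x n), (Nat.choose (n - x n - i + 2) 2 : ℝ) * r i) ∧
        (∑ i ∈ Finset.Icc 1 (x n), (Nat.choose (n - x n - i + 2) 2 : ℝ) * r i) ≤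
          κ₂ * (Nat.choose (n - 2 * x n + 2) 2 : ℝ) * r (x n) :=
  stmt_14_general μ α c hα0 hα1 hc r hr0 hrpos hrmono hasym x hx2
end

section
/- Let μ > 1, 0 < α < 1 and c > 0 be real numbers, let r : ℕ → ℝ satisfy r(0) = 0, r(n) > 0 and r(n+1) > r(n) for all n ≥ 1, and r(n)·n^μ·α^n → c as n → ∞, and fix a real γ with 0 < γ < 1. Let x : ℕ → ℕ satisfy x_n → ∞ and 2·x_n ≤ n for all n. With A^{(n)}_i := C(n − x_n − i + 2, 2)·r(i), one has [∑_{1 ≤ i < x_n − n^γ} A^{(n)}_i] / A^{(n)}_{x_n} → 0 as n → ∞. -/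
open Filter Finset

/-! Since `r k ≍ k^(-μ) α^(-k)`, every `r i` with `i ≤ x_n - n^γ` is at most
`O(x_n^μ α^(n^γ)) · r x_n`. The binomial weights and the number of terms only contribute a
further polynomial factor `O(n^3)`, and `α^(n^γ)` beats every power of `n`. -/

lemma tendsto_natCast_rpow_mul_rpow_rpow_nhds_zero {α γ : ℝ} (hα0 : 0 < α) (hα1 : α < 1)
    (hγ : 0 < γ) (s : ℝ) :
    Tendsto (fun n : ℕ => (n : ℝ) ^ s * α ^ ((n : ℝ) ^ γ)) atTop (nhds 0) := by
  have hlog : 0 < -Real.log α := neg_pos.2 (Real.log_neg hα0 hα1)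
  refine ((tendsto_rpow_mul_exp_neg_mul_atTop_nhds_zero (s / γ) _ hlog).comp
    ((tendsto_rpow_atTop hγ).comp tendsto_natCast_atTop_atTop)).congr fun n => ?_
  simp only [Function.comp_apply]
  rw [← Real.rpow_mul (Nat.cast_nonneg n), mul_div_cancel₀ s hγ.ne', Real.rpow_def_of_pos hα0]
  ring_nf

lemma exists_forall_mul_pow_le {r : ℕ → ℝ} {μ α c : ℝ} (hμ : 0 ≤ μ) (hα : 0 ≤ α)
    (hr : ∀ k, 1 ≤ k → 0 ≤ r k)
    (h : Tendsto (fun n : ℕ => r n * (n : ℝ) ^ μ * α ^ n) atTop (nhds c)) :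
    ∃ B, ∀ k, 1 ≤ k → r k * α ^ k ≤ B := by
  obtain ⟨B, hB⟩ := h.bddAbove_range
  refine ⟨B, fun k hk => le_trans ?_ (hB ⟨k, rfl⟩)⟩
  have hkμ : 1 ≤ (k : ℝ) ^ μ := Real.one_le_rpow (by exact_mod_cast hk) hμ
  have hnn : 0 ≤ r k * α ^ k := mul_nonneg (hr k hk) (pow_nonneg hα k)
  calc r k * α ^ k ≤ r k * α ^ k * (k : ℝ) ^ μ := le_mul_of_one_le_right hnn hkμ
    _ = r k * (k : ℝ) ^ μ * α ^ k := by ring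

lemma le_mul_of_mul_pow_le_of_le_mul_pow {α a B u v μ s : ℝ} {i j : ℕ} (hα0 : 0 < α)
    (hα1 : α < 1) (ha : 0 < a) (hu : 0 ≤ u) (hi : u * α ^ i ≤ B)
    (hj : a ≤ v * (j : ℝ) ^ μ * α ^ j) (hij : (i : ℝ) ≤ j - s) :
    u ≤ B / a * (j : ℝ) ^ μ * α ^ s * v := by
  have hpow : α ^ j ≤ α ^ i * α ^ s := by
    rw [← Real.rpow_natCast, ← Real.rpow_natCast, ← Real.rpow_add hα0]
    exact Real.rpow_le_rpow_of_exponent_ge hα0 hα1.le (by linarith)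
  have hvj : 0 ≤ v * (j : ℝ) ^ μ := by
    by_contra! hneg
    nlinarith [pow_pos hα0 j]
  rw [div_mul_eq_mul_div, div_mul_eq_mul_div, div_mul_eq_mul_div, le_div_iff₀ ha]
  calc u * a ≤ u * (v * (j : ℝ) ^ μ * α ^ j) := mul_le_mul_of_nonneg_left hj hu
    _ = v * (j : ℝ) ^ μ * (u * α ^ j) := by ring
    _ ≤ v * (j : ℝ) ^ μ * (u * α ^ i * α ^ s) := by
        rw [mul_assoc u]; gcongr
    _ ≤ v * (j : ℝ) ^ μ * (B * α ^ s) := by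
        gcongr
    _ = B * (j : ℝ) ^ μ * α ^ s * v := by ring

lemma choose_two_le_nine_mul_sq {k n : ℕ} (hk : k ≤ n + 2) (hn : 1 ≤ n) :
    (k.choose 2 : ℝ) ≤ 9 * (n : ℝ) ^ 2 := by
  have hk3 : (k : ℝ) ≤ 3 * n := by exact_mod_cast (by omega : k ≤ 3 * n)
  calc (k.choose 2 : ℝ) ≤ (k : ℝ) ^ 2 / (Nat.factorial 2 : ℕ) := Nat.choose_le_pow_div 2 k
    _ ≤ 9 * (n : ℝ) ^ 2 := by
        norm_num
        nlinarith [(Nat.cast_nonneg k : (0 : ℝ) ≤ k)]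

lemma sum_choose_mul_div_le {r : ℕ → ℝ} {μ α c γ B : ℝ} (hμ : 0 ≤ μ) (hα0 : 0 < α)
    (hα1 : α < 1) (hc : 0 < c) (hr : ∀ k, 1 ≤ k → 0 < r k)
    (hB : ∀ k, 1 ≤ k → r k * α ^ k ≤ B) {n m : ℕ} (hmn : 2 * m ≤ n) (hm : 1 ≤ m)
    (hlow : c / 2 < r m * (m : ℝ) ^ μ * α ^ m) {S : Finset ℕ}
    (hS : ∀ i ∈ S, 1 ≤ i ∧ (i : ℝ) < m - (n : ℝ) ^ γ) (hcard : S.card ≤ n) :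
    0 ≤ (∑ i ∈ S, ((n - m - i + 2).choose 2 : ℝ) * r i) / ((n - m - m + 2).choose 2 * r m) ∧
      (∑ i ∈ S, ((n - m - i + 2).choose 2 : ℝ) * r i) / ((n - m - m + 2).choose 2 * r m) ≤
        18 * B / c * ((n : ℝ) ^ (μ + 3) * α ^ ((n : ℝ) ^ γ)) := by
  have hn : 1 ≤ n := by omega
  have hn0 : (0 : ℝ) < n := by exact_mod_cast hn
  have hrm := hr m hm
  set ε := B / (c / 2) * (n : ℝ) ^ μ * α ^ ((n : ℝ) ^ γ) with hε
  have hB0 : 0 ≤ B := le_trans (mul_pos (hr 1 le_rfl) (pow_pos hα0 1)).le (hB 1 le_rfl)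
  have hterm : ∀ i ∈ S, ((n - m - i + 2).choose 2 : ℝ) * r i ≤ 9 * (n : ℝ) ^ 2 * (ε * r m) := by
    intro i hi
    obtain ⟨hi1, hilt⟩ := hS i hi
    have hri : r i ≤ ε * r m := by
      refine (le_mul_of_mul_pow_le_of_le_mul_pow hα0 hα1 (half_pos hc) (hr i hi1).le
        (hB i hi1) hlow.le (s := (n : ℝ) ^ γ) hilt.le).trans ?_
      rw [hε]
      gcongr
      exact_mod_cast (by omega : m ≤ n)
    exact mul_le_mul (choose_two_le_nine_mul_sq (by omega) hn) hri (hr i hi1).le (by positivity)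
  have hsum_nonneg : 0 ≤ ∑ i ∈ S, ((n - m - i + 2).choose 2 : ℝ) * r i :=
    sum_nonneg fun i hi => mul_nonneg (Nat.cast_nonneg _) (hr i (hS i hi).1).le
  have hsum : ∑ i ∈ S, ((n - m - i + 2).choose 2 : ℝ) * r i ≤ n * (9 * (n : ℝ) ^ 2 * (ε * r m)) :=
    calc ∑ i ∈ S, ((n - m - i + 2).choose 2 : ℝ) * r i
        ≤ S.card * (9 * (n : ℝ) ^ 2 * (ε * r m)) := by
          simpa only [nsmul_eq_mul] using sum_le_card_nsmul S _ _ hterm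
      _ ≤ n * (9 * (n : ℝ) ^ 2 * (ε * r m)) := by
          gcongr
  have hden : r m ≤ (n - m - m + 2).choose 2 * r m :=
    le_mul_of_one_le_left hrm.le (by exact_mod_cast Nat.choose_pos (by omega))
  refine ⟨div_nonneg hsum_nonneg (hrm.le.trans hden), ?_⟩
  calc (∑ i ∈ S, ((n - m - i + 2).choose 2 : ℝ) * r i) / ((n - m - m + 2).choose 2 * r m)
      ≤ n * (9 * (n : ℝ) ^ 2 * (ε * r m)) / r m :=
        div_le_div₀ (hsum_nonneg.trans hsum) hsum hrm hden
    _ = 18 * B / c * ((n : ℝ) ^ (μ + 3) * α ^ ((n : ℝ) ^ γ)) := by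
        rw [Real.rpow_add hn0, Real.rpow_ofNat, hε]
        field_simp
        ring

open scoped Classical in
theorem stmt_15_general (μ α c : ℝ) (hμ : 1 < μ) (hα0 : 0 < α) (hα1 : α < 1) (hc : 0 < c)
    (r : ℕ → ℝ) (hrpos : ∀ n, 1 ≤ n → 0 < r n)
    (hasym : Tendsto (fun n : ℕ => r n * (n : ℝ) ^ μ * α ^ n) atTop (nhds c))
    (γ : ℝ) (hγ0 : 0 < γ)
    (x : ℕ → ℕ) (hx : Tendsto x atTop atTop) (hx2 : ∀ n, 2 * x n ≤ n)
    (A : ℕ → ℕ → ℝ)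
    (hA : ∀ n i, A n i = (Nat.choose (n - x n - i + 2) 2 : ℝ) * r i) :
    Tendsto
      (fun n =>
        (∑ i ∈ (Finset.Icc 1 (x n)).filter
            (fun i : ℕ => (i : ℝ) < (x n : ℝ) - (n : ℝ) ^ γ), A n i) / A n (x n))
      atTop (nhds 0) := by
  have hμ0 : 0 ≤ μ := by linarith
  obtain ⟨B, hB⟩ := exists_forall_mul_pow_le hμ0 hα0.le (fun k hk => (hrpos k hk).le) hasym
  have hlim := (tendsto_natCast_rpow_mul_rpow_rpow_nhds_zero hα0 hα1 hγ0 (μ + 3)).const_mul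
    (18 * B / c)
  rw [mul_zero] at hlim
  have hbounds : ∀ᶠ n in atTop, 0 ≤ (∑ i ∈ (Finset.Icc 1 (x n)).filter
        (fun i : ℕ => (i : ℝ) < (x n : ℝ) - (n : ℝ) ^ γ), A n i) / A n (x n) ∧
      (∑ i ∈ (Finset.Icc 1 (x n)).filter
        (fun i : ℕ => (i : ℝ) < (x n : ℝ) - (n : ℝ) ^ γ), A n i) / A n (x n) ≤
        18 * B / c * ((n : ℝ) ^ (μ + 3) * α ^ ((n : ℝ) ^ γ)) := by
    filter_upwards [(hasym.comp hx).eventually_const_lt (half_lt_self hc),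
      hx.eventually_ge_atTop 1] with n hlow hxn
    simp only [hA]
    refine sum_choose_mul_div_le hμ0 hα0 hα1 hc hrpos hB (hx2 n) hxn hlow
      (fun i hi => ?_) ((card_filter_le _ _).trans (by rw [Nat.card_Icc]; have := hx2 n; omega))
    simp only [mem_filter, mem_Icc] at hi
    exact ⟨hi.1.1, hi.2⟩
  exact squeeze_zero' (hbounds.mono fun _ h => h.1) (hbounds.mono fun _ h => h.2) hlim

open scoped Classical in
theorem stmt_15 (μ α c : ℝ) (hμ : 1 < μ) (hα0 : 0 < α) (hα1 : α < 1) (hc : 0 < c)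
    (r : ℕ → ℝ) (hr0 : r 0 = 0) (hrpos : ∀ n, 1 ≤ n → 0 < r n)
    (hrmono : ∀ n, 1 ≤ n → r n < r (n + 1))
    (hasym : Tendsto (fun n : ℕ => r n * (n : ℝ) ^ μ * α ^ n) atTop (nhds c))
    (γ : ℝ) (hγ0 : 0 < γ) (hγ1 : γ < 1)
    (x : ℕ → ℕ) (hx : Tendsto x atTop atTop) (hx2 : ∀ n, 2 * x n ≤ n)
    (A : ℕ → ℕ → ℝ)
    (hA : ∀ n i, A n i = (Nat.choose (n - x n - i + 2) 2 : ℝ) * r i) :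
    Tendsto
      (fun n =>
        (∑ i ∈ (Finset.Icc 1 (x n)).filter
            (fun i : ℕ => (i : ℝ) < (x n : ℝ) - (n : ℝ) ^ γ), A n i) / A n (x n))
      atTop (nhds 0) :=
  stmt_15_general μ α c hμ hα0 hα1 hc r hrpos hasym γ hγ0 x hx hx2 A hA
end

section
/- Let μ > 1, 0 < α < 1 and c > 0 be real numbers, and let a : ℕ → ℝ be nonnegative with a(n)·n^μ·α^n → c as n → ∞. Then A := ∑_{x=0}^∞ a(x)·α^x converges, and the convolution square b(n) := ∑_{x=0}^n a(x)·a(n − x) satisfies b(n)·n^μ·α^n → 2·c·A as n → ∞. -/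
/-!
Put `f n = a n * α ^ n`, so that `f n * n ^ μ → c`; in particular `f = O(n ^ (-μ))` is summable
since `μ > 1`. Multiplying by `α ^ n` turns `b n` into the convolution `∑_{x ≤ n} f x * f (n - x)`,
which we split at `n / 2` and, by symmetry, write as two sums over the smaller index `x`. On such
a half `n - x ≥ n / 2`, so `|f (n - x)| * n ^ μ ≤ 2 ^ μ * sup_m |f m| * m ^ μ`, while for each fixed
`x` we have `f (n - x) * n ^ μ → c`. Dominated convergence for series makes each half tend to
`c * ∑ f`.
-/

open Filter Finset Topology Asymptotics

theorem Finset.sum_range_add_eq_add_sum_range_reflect {M : Type*} [AddCommMonoid M]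
    (g : ℕ → M) (m k : ℕ) :
    ∑ x ∈ range (m + k), g x = ∑ x ∈ range m, g x + ∑ x ∈ range k, g (m + k - 1 - x) := by
  rw [sum_range_add, ← sum_range_reflect _ k]
  congr 1
  refine sum_congr rfl fun x hx => ?_
  rw [mem_range] at hx
  congr 1
  omega

theorem Finset.sum_range_succ_mul_comp_sub_eq_add {R : Type*} [CommSemiring R] (g : ℕ → R)
    (n : ℕ) : ∑ x ∈ range (n + 1), g x * g (n - x) =
      ∑ x ∈ range (n / 2 + 1), g x * g (n - x) + ∑ x ∈ range ((n + 1) / 2), g x * g (n - x) := by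
  conv_lhs => rw [show n + 1 = n / 2 + 1 + (n + 1) / 2 by omega,
    sum_range_add_eq_add_sum_range_reflect]
  congr 1
  refine sum_congr rfl fun x hx => ?_
  rw [mem_range] at hx
  rw [show n / 2 + 1 + (n + 1) / 2 - 1 - x = n - x by omega, show n - (n - x) = x by omega,
    mul_comm]

namespace ConvolutionSquare

variable {f : ℕ → ℝ} {μ c : ℝ}

theorem summable_of_tendsto_mul_rpow (hμ : 1 < μ)
    (hf : Tendsto (fun n : ℕ => f n * (n : ℝ) ^ μ) atTop (𝓝 c)) : Summable f := by
  have hO : f =O[atTop] fun n : ℕ => (n : ℝ) ^ (-μ) := by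
    have hfeq : (fun n : ℕ => f n * (n : ℝ) ^ μ * (n : ℝ) ^ (-μ)) =ᶠ[atTop] f := by
      filter_upwards [eventually_ge_atTop 1] with n hn
      rw [mul_assoc, ← Real.rpow_add (by exact_mod_cast hn), add_neg_cancel, Real.rpow_zero,
        mul_one]
    simpa using ((hf.isBigO_one ℝ).mul (isBigO_refl (fun n : ℕ => (n : ℝ) ^ (-μ)) atTop)
      ).congr' hfeq EventuallyEq.rfl
  exact summable_of_isBigO_nat (Real.summable_nat_rpow.2 (by linarith)) hO

theorem tendsto_comp_sub_mul_rpow (hf : Tendsto (fun n : ℕ => f n * (n : ℝ) ^ μ) atTop (𝓝 c))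
    (x : ℕ) : Tendsto (fun n : ℕ => f (n - x) * (n : ℝ) ^ μ) atTop (𝓝 c) := by
  rw [← tendsto_add_atTop_iff_nat x]
  have hratio : Tendsto (fun n : ℕ => ((n : ℝ) / (n + x))⁻¹ ^ μ) atTop (𝓝 1) := by
    simpa using ((tendsto_natCast_div_add_atTop (x : ℝ)).inv₀ one_ne_zero).rpow_const
      (p := μ) (Or.inl (by norm_num))
  refine (mul_one c ▸ hf.mul hratio).congr' ?_
  filter_upwards [eventually_ge_atTop 1] with n hn
  have hn' : (0 : ℝ) < n := by exact_mod_cast hn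
  rw [inv_div, Real.div_rpow (by positivity) hn'.le, Nat.add_sub_cancel, Nat.cast_add]
  field_simp [(Real.rpow_pos_of_pos hn' μ).ne']

theorem abs_comp_sub_mul_rpow_le (hμ : 0 ≤ μ) {C : ℝ} (hC : ∀ m : ℕ, |f m * (m : ℝ) ^ μ| ≤ C)
    {n x : ℕ} (hx : 2 * x ≤ n) : |f (n - x) * (n : ℝ) ^ μ| ≤ 2 ^ μ * C := by
  have hn : (n : ℝ) ^ μ ≤ 2 ^ μ * ((n - x : ℕ) : ℝ) ^ μ := by
    rw [← Real.mul_rpow zero_le_two (Nat.cast_nonneg _)]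
    exact Real.rpow_le_rpow (Nat.cast_nonneg _) (by exact_mod_cast (by omega : n ≤ 2 * (n - x)))
      hμ
  calc |f (n - x) * (n : ℝ) ^ μ| = |f (n - x)| * (n : ℝ) ^ μ := by
        rw [abs_mul, abs_of_nonneg (Real.rpow_nonneg (Nat.cast_nonneg n) μ)]
    _ ≤ |f (n - x)| * (2 ^ μ * ((n - x : ℕ) : ℝ) ^ μ) := by gcongr
    _ = 2 ^ μ * |f (n - x) * ((n - x : ℕ) : ℝ) ^ μ| := by
        rw [abs_mul, abs_of_nonneg (Real.rpow_nonneg (Nat.cast_nonneg _) μ)]; ring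
    _ ≤ 2 ^ μ * C := by gcongr; exact hC _

theorem tendsto_sum_range_mul_comp_sub_mul_rpow (hμ : 1 < μ)
    (hf : Tendsto (fun n : ℕ => f n * (n : ℝ) ^ μ) atTop (𝓝 c)) {k : ℕ → ℕ}
    (hk_le : ∀ n, 2 * k n ≤ n + 2) (hk : Tendsto k atTop atTop) :
    Tendsto (fun n : ℕ => (∑ x ∈ range (k n), f x * f (n - x)) * (n : ℝ) ^ μ) atTop
      (𝓝 (c * ∑' x, f x)) := by
  obtain ⟨C, hC⟩ := hf.abs.bddAbove_range
  have hCf : ∀ m : ℕ, |f m * (m : ℝ) ^ μ| ≤ C := fun m => hC (Set.mem_range_self m)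
  set g : ℕ → ℕ → ℝ := fun n x => f x * (f (n - x) * (n : ℝ) ^ μ)
  have hsum : ∀ n, (∑ x ∈ range (k n), f x * f (n - x)) * (n : ℝ) ^ μ =
      ∑' x, (range (k n) : Set ℕ).indicator (g n) x := by
    intro n
    rw [← sum_eq_tsum_indicator, sum_mul]
    exact sum_congr rfl fun x _ => mul_assoc _ _ _
  simp_rw [hsum, ← tsum_mul_left, mul_comm c]
  refine tendsto_tsum_of_dominated_convergence
    ((summable_of_tendsto_mul_rpow hμ hf).abs.mul_right (2 ^ μ * C)) (fun x => ?_)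
    (Eventually.of_forall fun n x => ?_)
  · refine (tendsto_const_nhds.mul (tendsto_comp_sub_mul_rpow hf x)).congr' ?_
    filter_upwards [hk.eventually_gt_atTop x] with n hn
    rw [Set.indicator_of_mem (by simpa using hn)]
  · by_cases hx : x ∈ range (k n)
    · rw [Set.indicator_of_mem (by simpa using hx), Real.norm_eq_abs, abs_mul]
      have : 2 * x ≤ n := by have := hk_le n; simp only [mem_range] at hx; omega
      gcongr
      exact abs_comp_sub_mul_rpow_le (by linarith) hCf this
    · rw [Set.indicator_of_notMem (by simpa using hx), norm_zero]
      have : 0 ≤ C := (abs_nonneg _).trans (hCf 0)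
      positivity

end ConvolutionSquare

theorem stmt_18_general (μ α c : ℝ) (hμ : 1 < μ)
    (a : ℕ → ℝ)
    (hasym : Tendsto (fun n : ℕ => a n * (n : ℝ) ^ μ * α ^ n) atTop (nhds c))
    (b : ℕ → ℝ)
    (hb : ∀ n, b n = ∑ x ∈ Finset.range (n + 1), a x * a (n - x)) :
    Summable (fun x : ℕ => a x * α ^ x) ∧
      Tendsto (fun n : ℕ => b n * (n : ℝ) ^ μ * α ^ n) atTop
        (nhds (2 * c * ∑' x : ℕ, a x * α ^ x)) := by
  set f : ℕ → ℝ := fun n => a n * α ^ n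
  have hf : Tendsto (fun n : ℕ => f n * (n : ℝ) ^ μ) atTop (𝓝 c) :=
    hasym.congr fun n => by simp only [f]; ring
  have hbf : ∀ n, b n * α ^ n = ∑ x ∈ range (n + 1), f x * f (n - x) := by
    intro n
    rw [hb, sum_mul]
    refine sum_congr rfl fun x hx => ?_
    rw [← pow_sub_mul_pow α (mem_range_succ_iff.1 hx)]
    ring
  have hlower := ConvolutionSquare.tendsto_sum_range_mul_comp_sub_mul_rpow hμ hf
    (k := fun n => n / 2 + 1) (by omega)
    (tendsto_atTop_mono (fun n => (n / 2).le_succ) (Nat.tendsto_div_const_atTop two_ne_zero))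
  have hupper := ConvolutionSquare.tendsto_sum_range_mul_comp_sub_mul_rpow hμ hf
    (k := fun n => (n + 1) / 2) (by omega)
    ((Nat.tendsto_div_const_atTop two_ne_zero).comp (tendsto_add_atTop_nat 1))
  refine ⟨ConvolutionSquare.summable_of_tendsto_mul_rpow hμ hf, ?_⟩
  rw [mul_assoc, two_mul]
  refine (hlower.add hupper).congr fun n => ?_
  rw [mul_right_comm, hbf, sum_range_succ_mul_comp_sub_eq_add, add_mul]

theorem stmt_18 (μ α c : ℝ) (hμ : 1 < μ) (hα0 : 0 < α) (hα1 : α < 1) (hc : 0 < c)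
    (a : ℕ → ℝ) (hapos : ∀ n, 0 ≤ a n)
    (hasym : Tendsto (fun n : ℕ => a n * (n : ℝ) ^ μ * α ^ n) atTop (nhds c))
    (b : ℕ → ℝ)
    (hb : ∀ n, b n = ∑ x ∈ Finset.range (n + 1), a x * a (n - x)) :
    Summable (fun x : ℕ => a x * α ^ x) ∧
      Tendsto (fun n : ℕ => b n * (n : ℝ) ^ μ * α ^ n) atTop
        (nhds (2 * c * ∑' x : ℕ, a x * α ^ x)) :=
  stmt_18_general μ α c hμ a hasym b hb
end
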